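/- arXiv:0711.3077 — 9 statements merged into one kernel-verified Lean document; each statement's English description precedes it below -/
import Mathlib

section
/- Let ξ be a real number with 0 < ξ < d_min²/2 and let M be an integer with M > ν·d_max²/ξ. Let x₀ be a message with codeword y₀, and let m be an integer such that [m−(2M+1)ν, m+(2M+1)ν) ⊆ [0, N+ν) and [m, m+ν) ⊆ [0, N). Suppose: (i) ‖r[d] − g(y₀[d])‖ < (d_min² − 2ξ)/(2·d_min) for every d ∈ [m−2Mν, m+2Mν); (ii) Σ_{d=m+2Mν}^{m+(2M+1)ν−1} ‖r[d] − g(y₀[d])‖² ≤ M·ξ − ν·d_max²; and (iii) Σ_{d=m−(2M+1)ν}^{m−2Mν−1} ‖r[d] − g(y₀[d])‖² ≤ M·ξ − ν·d_max². Then every message x* that minimizes S over all messages satisfies x*[m̃] = x₀[m̃] for all m̃ ∈ [m, m+ν). -/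
/-!
Suppose an optimal message `xs` differs from `x₀` somewhere in `[m, m + ν)`, and splice: let `x'`
be `x₀` on an interval `[a, b)` around `m` and `xs` elsewhere. Its codeword is that of `x₀` on
`[a + ν, b)`, that of `xs` outside `[a, b + ν)`, and a mixture on the two transition zones
`[a, a + ν)` and `[b, b + ν)`. Where condition (i) holds, the received word is so close to `x₀`'s
codeword that each symbol where the codewords of `xs` and `x₀` differ costs `xs` more than `2ξ`
extra (triangle inequality against `d_min`). A transition zone costs at most `2Mξ`, by (ii) or
(iii) and `d_max`. The ends `a`, `b` are found block by block: if some length-`ν` block between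
`m` and the edge of the window carries no message error, cut right next to it and that zone
costs nothing; otherwise, by observability, every second block contributes a distinct symbol
error, so at least `M` of them pay for the zone. Either way `S(x') < S(xs)`.
-/

open Finset

/-- A message of the convolutional code: `x[d] = 0` for `d < 0` and `d ≥ N`. -/
def IsMsg {K : Type*} [Zero K] (k N : ℕ) (x : ℤ → Fin k → K) : Prop :=
  ∀ d : ℤ, d < 0 ∨ (N : ℤ) ≤ d → x d = 0

/-- The codeword of a message: `y[d] = ∑_{l=0}^{ν-1} x[d-l] · G[l]`. -/
def cw {K : Type*} [Field K] (k n ν : ℕ) (G : ℕ → Matrix (Fin k) (Fin n) K)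
    (x : ℤ → Fin k → K) (d : ℤ) : Fin n → K :=
  ∑ l ∈ Finset.range ν, Matrix.vecMul (x (d - l)) (G l)

/-- Componentwise extension of the modulation map `gq : K → ℝ` to codeword symbols. -/
def gmap {K : Type*} (n : ℕ) (gq : K → ℝ) (y : Fin n → K) :
    EuclideanSpace ℝ (Fin n) :=
  WithLp.toLp 2 (fun i => gq (y i))

/-- Negative sum log likelihood `S(x) = ∑_{d=0}^{N+ν-1} ‖r[d] - g(y[d])‖²`. -/
noncomputable def negSLL {K : Type*} [Field K] (k n ν N : ℕ)
    (G : ℕ → Matrix (Fin k) (Fin n) K) (gq : K → ℝ)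
    (r : ℤ → EuclideanSpace ℝ (Fin n)) (x : ℤ → Fin k → K) : ℝ :=
  ∑ d ∈ Finset.Ico (0 : ℤ) ((N : ℤ) + ν), ‖r d - gmap n gq (cw k n ν G x d)‖ ^ 2

section Geometry

variable {E : Type*} [SeminormedAddCommGroup E]

theorem sq_norm_sub_add_lt_sq_norm_sub {r u v : E} {D ξ : ℝ} (hD : 0 < D) (hξ : 0 ≤ ξ)
    (huv : D ≤ ‖u - v‖ ^ 2) (hr : ‖r - v‖ < (D - 2 * ξ) / (2 * Real.sqrt D)) :
    ‖r - v‖ ^ 2 + 2 * ξ < ‖r - u‖ ^ 2 := by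
  set s := Real.sqrt D
  have hs : 0 < s := Real.sqrt_pos.mpr hD
  have hsD : s ^ 2 = D := Real.sq_sqrt hD.le
  have hsuv : s ≤ ‖u - v‖ := (Real.sqrt_le_sqrt huv).trans_eq (Real.sqrt_sq (norm_nonneg _))
  have htri : ‖u - v‖ ≤ ‖r - u‖ + ‖r - v‖ := by
    simpa only [norm_sub_rev u r] using norm_sub_le_norm_sub_add_norm_sub u r v
  have hrs : ‖r - v‖ * (2 * s) < s ^ 2 - 2 * ξ := by
    rw [hsD]; exact (lt_div_iff₀ (by positivity)).mp hr
  have hvs : 0 ≤ s - ‖r - v‖ := by nlinarith [norm_nonneg (r - v)]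
  have hus : s - ‖r - v‖ ≤ ‖r - u‖ := by linarith
  nlinarith [mul_le_mul hus hus hvs (norm_nonneg (r - u))]

theorem sq_norm_sub_le_two_mul (r u v : E) :
    ‖r - u‖ ^ 2 ≤ 2 * ‖r - v‖ ^ 2 + 2 * ‖v - u‖ ^ 2 := by
  have := norm_sub_le_norm_sub_add_norm_sub r v u
  nlinarith [sq_nonneg (‖r - v‖ - ‖v - u‖), norm_nonneg (r - u)]

end Geometry

section Modulation

variable {K : Type*} {n : ℕ} {gq : K → ℝ}

def sqDists (n : ℕ) (gq : K → ℝ) : Set ℝ :=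
  {t | ∃ y1 y2 : Fin n → K, y1 ≠ y2 ∧ t = ‖gmap n gq y1 - gmap n gq y2‖ ^ 2}

theorem gmap_injective (hgq : Function.Injective gq) : Function.Injective (gmap n gq) :=
  fun _ _ h => funext fun i => hgq (congrArg (· i) h)

theorem pos_of_isLeast_sqDists (hgq : Function.Injective gq) {dmin2 : ℝ}
    (h : IsLeast (sqDists n gq) dmin2) : 0 < dmin2 := by
  obtain ⟨y1, y2, hne, rfl⟩ := h.1
  exact pow_pos (norm_pos_iff.mpr (sub_ne_zero.mpr ((gmap_injective hgq).ne hne))) 2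

theorem sq_norm_gmap_sub_le_of_isGreatest {dmax2 : ℝ} (h : IsGreatest (sqDists n gq) dmax2)
    (y1 y2 : Fin n → K) : ‖gmap n gq y1 - gmap n gq y2‖ ^ 2 ≤ dmax2 := by
  obtain rfl | hne := eq_or_ne y1 y2
  · obtain ⟨_, _, _, rfl⟩ := h.1
    rw [sub_self, norm_zero, zero_pow two_ne_zero]
    positivity
  · exact h.2 ⟨y1, y2, hne, rfl⟩

end Modulation

section Code

variable {K : Type*} {k n ν N : ℕ}

theorem isMsg_piecewise [Zero K] {x₀ xs : ℤ → Fin k → K} (h₀ : IsMsg k N x₀)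
    (hs : IsMsg k N xs) (s : Set ℤ) [DecidablePred (· ∈ s)] : IsMsg k N (s.piecewise x₀ xs) :=
  fun d hd => by by_cases h : d ∈ s <;> simp [h, h₀ d hd, hs d hd]

variable [Field K] {G : ℕ → Matrix (Fin k) (Fin n) K}

theorem cw_eq_of_eqOn {x x' : ℤ → Fin k → K} {d : ℤ} (h : Set.EqOn x x' (Set.Ioc (d - ν) d)) :
    cw k n ν G x d = cw k n ν G x' d :=
  sum_congr rfl fun l hl => by
    rw [h ⟨by simp only [mem_range] at hl; omega, by omega⟩]

theorem cw_piecewise_of_eqOn_inter {x₀ xs : ℤ → Fin k → K} {d : ℤ} (s : Set ℤ)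
    [DecidablePred (· ∈ s)] (h : Set.EqOn x₀ xs (s ∩ Set.Ioc (d - ν) d)) :
    cw k n ν G (s.piecewise x₀ xs) d = cw k n ν G xs d :=
  cw_eq_of_eqOn fun e he => by
    by_cases hs : e ∈ s
    · rw [Set.piecewise_eq_of_mem _ _ _ hs]; exact h ⟨hs, he⟩
    · rw [Set.piecewise_eq_of_notMem _ _ _ hs]

theorem cw_piecewise_of_subset {x₀ xs : ℤ → Fin k → K} {d : ℤ} {s : Set ℤ}
    [DecidablePred (· ∈ s)] (h : Set.Ioc (d - ν) d ⊆ s) :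
    cw k n ν G (s.piecewise x₀ xs) d = cw k n ν G x₀ d :=
  cw_eq_of_eqOn ((Set.piecewise_eqOn s x₀ xs).mono h)

end Code

section Counting

theorem le_card_filter_Ico {P : ℤ → Prop} [DecidablePred P] {c L : ℤ} :
    ∀ M : ℕ, (∀ t < M, ∃ d, c + t * L ≤ d ∧ d < c + (t + 1) * L ∧ P d) →
      M ≤ #{d ∈ Ico c (c + M * L) | P d}
  | 0, _ => Nat.zero_le _
  | M + 1, h => by
    obtain ⟨d, hd₁, hd₂, hd⟩ := h M M.lt_succ_self
    have ih := le_card_filter_Ico M fun t ht => h t (ht.trans M.lt_succ_self)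
    push_cast at hd₂ ⊢
    have hL : 0 < L := by linarith
    have hML : 0 ≤ (M : ℤ) * L := by positivity
    calc M + 1 ≤ #(insert d {e ∈ Ico c (c + M * L) | P e}) := by
          rw [card_insert_of_notMem (by simp [hd₁])]; omega
      _ ≤ _ := card_le_card (insert_subset (mem_filter.mpr ⟨mem_Ico.mpr ⟨by linarith, hd₂⟩, hd⟩)
          (filter_subset_filter _ (Ico_subset_Ico_right (by linarith))))

theorem exists_block_or_le_card_filter {P Q : ℤ → Prop} [DecidablePred Q] {L : ℤ}
    (hPQ : ∀ e, P e → ∃ d, e ≤ d ∧ d < e + L ∧ Q d) (c : ℤ) (M : ℕ) :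
    (∃ j : ℕ, j < 2 * M ∧ ∀ e, c + j * L ≤ e → e < c + (j + 1) * L → ¬P e) ∨
      M ≤ #{d ∈ Ico c (c + M * (2 * L)) | Q d} := by
  refine or_iff_not_imp_left.mpr fun h => le_card_filter_Ico M fun t ht => ?_
  push Not at h
  -- only even blocks, so that the observation windows `[e, e + L)` stay disjoint
  obtain ⟨e, he₁, he₂, he⟩ := h (2 * t) (by omega)
  obtain ⟨d, hd₁, hd₂, hd⟩ := hPQ e he
  push_cast at he₁ he₂
  exact ⟨d, by linarith, by linarith, hd⟩

theorem card_filter_Ico_add_card_filter_Ico {P : ℤ → Prop} [DecidablePred P] {a b c : ℤ}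
    (hab : a ≤ b) (hbc : b ≤ c) :
    #{d ∈ Ico a b | P d} + #{d ∈ Ico b c | P d} = #{d ∈ Ico a c | P d} := by
  rw [← card_union_of_disjoint (disjoint_filter_filter (Ico_disjoint_Ico_consecutive a b c)),
    ← filter_union, Ico_union_Ico_eq_Ico hab hbc]

end Counting

section Likelihood

variable {K : Type*} [Field K] {k n ν N : ℕ} {G : ℕ → Matrix (Fin k) (Fin n) K} {gq : K → ℝ}
  {r : ℤ → EuclideanSpace ℝ (Fin n)}

variable (ν G gq r) in
noncomputable def branchCost (x : ℤ → Fin k → K) (d : ℤ) : ℝ :=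
  ‖r d - gmap n gq (cw k n ν G x d)‖ ^ 2

theorem negSLL_eq_sum_branchCost (x : ℤ → Fin k → K) :
    negSLL k n ν N G gq r x = ∑ d ∈ Ico (0 : ℤ) (N + ν), branchCost ν G gq r x d :=
  rfl

theorem negSLL_piecewise_sub (x₀ xs : ℤ → Fin k → K) {a b : ℤ} (ha : 0 ≤ a) (hab : a + ν ≤ b)
    (hb : b ≤ N) :
    negSLL k n ν N G gq r ((Set.Ico a b).piecewise x₀ xs) - negSLL k n ν N G gq r xs =
      ∑ d ∈ Ico a (a + ν), (branchCost ν G gq r ((Set.Ico a b).piecewise x₀ xs) d -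
          branchCost ν G gq r xs d) +
        ∑ d ∈ Ico (a + ν) b, (branchCost ν G gq r ((Set.Ico a b).piecewise x₀ xs) d -
          branchCost ν G gq r xs d) +
        ∑ d ∈ Ico b (b + ν), (branchCost ν G gq r ((Set.Ico a b).piecewise x₀ xs) d -
          branchCost ν G gq r xs d) := by
  have hout : ∀ d ∈ Ico (0 : ℤ) (N + ν), d ∉ Ico a (b + ν) →
      branchCost ν G gq r ((Set.Ico a b).piecewise x₀ xs) d - branchCost ν G gq r xs d = 0 := by
    intro d _ hd
    have hagree : Set.EqOn x₀ xs (Set.Ico a b ∩ Set.Ioc (d - ν) d) := fun e he => by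
      simp only [mem_Ico, Set.mem_inter_iff, Set.mem_Ico, Set.mem_Ioc] at hd he
      omega
    rw [branchCost, cw_piecewise_of_eqOn_inter _ hagree, branchCost, sub_self]
  rw [negSLL_eq_sum_branchCost, negSLL_eq_sum_branchCost, ← sum_sub_distrib,
    ← sum_subset (Ico_subset_Ico ha (by omega)) hout,
    ← Ico_union_Ico_eq_Ico (by omega) (show b ≤ b + ν by omega),
    sum_union (Ico_disjoint_Ico_consecutive _ _ _), ← Ico_union_Ico_eq_Ico (by omega) hab,
    sum_union (Ico_disjoint_Ico_consecutive _ _ _)]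

variable {dmax2 ξ : ℝ} {M : ℤ}

theorem sum_branchCost_sub_le (hdmax : ∀ y1 y2 : Fin n → K,
    ‖gmap n gq y1 - gmap n gq y2‖ ^ 2 ≤ dmax2) (x₀ x x' : ℤ → Fin k → K) (I : Finset ℤ) :
    ∑ d ∈ I, (branchCost ν G gq r x' d - branchCost ν G gq r x d) ≤
      2 * ∑ d ∈ I, branchCost ν G gq r x₀ d + 2 * #I * dmax2 := by
  calc ∑ d ∈ I, (branchCost ν G gq r x' d - branchCost ν G gq r x d)
      ≤ ∑ d ∈ I, (2 * branchCost ν G gq r x₀ d + 2 * dmax2) := sum_le_sum fun d _ => by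
        have := sq_norm_sub_le_two_mul (r d) (gmap n gq (cw k n ν G x' d))
          (gmap n gq (cw k n ν G x₀ d))
        have := hdmax (cw k n ν G x₀ d) (cw k n ν G x' d)
        have : 0 ≤ branchCost ν G gq r x d := sq_nonneg _
        simp only [branchCost] at *
        linarith
    _ = _ := by rw [sum_add_distrib, ← mul_sum, sum_const, nsmul_eq_mul]; ring

theorem sum_branchCost_sub_eq_zero {x x' : ℤ → Fin k → K} {I : Finset ℤ}
    (h : ∀ d ∈ I, cw k n ν G x' d = cw k n ν G x d) :
    ∑ d ∈ I, (branchCost ν G gq r x' d - branchCost ν G gq r x d) = 0 :=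
  sum_eq_zero fun d hd => by simp only [branchCost, h d hd, sub_self]

theorem sum_branchCost_sub_le_of_sum_le (hdmax : ∀ y1 y2 : Fin n → K,
    ‖gmap n gq y1 - gmap n gq y2‖ ^ 2 ≤ dmax2) (hξ : 0 ≤ ξ) {x₀ x x' : ℤ → Fin k → K}
    {I : Finset ℤ} (hI : #I = ν) {C : ℝ}
    (hsum : ∑ d ∈ I, branchCost ν G gq r x₀ d ≤ M * ξ - ν * dmax2) (hMC : (M : ℝ) ≤ C) :
    ∑ d ∈ I, (branchCost ν G gq r x' d - branchCost ν G gq r x d) ≤ 2 * ξ * C := by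
  have := sum_branchCost_sub_le (ν := ν) (G := G) (r := r) hdmax x₀ x x' I
  rw [hI] at this
  nlinarith

theorem sum_branchCost_sub_lt [DecidableEq K] {dmin2 : ℝ} (hdmin2 : 0 < dmin2)
    (hsep : ∀ y1 y2 : Fin n → K, y1 ≠ y2 → dmin2 ≤ ‖gmap n gq y1 - gmap n gq y2‖ ^ 2)
    (hξ : 0 ≤ ξ) {x₀ x x' : ℤ → Fin k → K} {I : Finset ℤ}
    (hx' : ∀ d ∈ I, cw k n ν G x' d = cw k n ν G x₀ d)
    (hr : ∀ d ∈ I, ‖r d - gmap n gq (cw k n ν G x₀ d)‖ < (dmin2 - 2 * ξ) / (2 * Real.sqrt dmin2))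
    (hne : {d ∈ I | cw k n ν G x d ≠ cw k n ν G x₀ d}.Nonempty) :
    ∑ d ∈ I, (branchCost ν G gq r x' d - branchCost ν G gq r x d) <
      -(2 * ξ) * #{d ∈ I | cw k n ν G x d ≠ cw k n ν G x₀ d} := by
  rw [← sum_filter_add_sum_filter_not I fun d => cw k n ν G x d ≠ cw k n ν G x₀ d]
  have hgain : ∑ d ∈ I with cw k n ν G x d ≠ cw k n ν G x₀ d,
      (branchCost ν G gq r x' d - branchCost ν G gq r x d) <
        ∑ d ∈ I with cw k n ν G x d ≠ cw k n ν G x₀ d, -(2 * ξ) :=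
    sum_lt_sum_of_nonempty hne fun d hd => by
      obtain ⟨hdI, hdiff⟩ := mem_filter.mp hd
      have := sq_norm_sub_add_lt_sq_norm_sub hdmin2 hξ (hsep _ _ hdiff) (hr d hdI)
      simp only [branchCost, hx' d hdI]
      linarith
  have hsame : ∑ d ∈ I with ¬cw k n ν G x d ≠ cw k n ν G x₀ d,
      (branchCost ν G gq r x' d - branchCost ν G gq r x d) = 0 :=
    sum_eq_zero fun d hd => by
      obtain ⟨hdI, hd⟩ := mem_filter.mp hd
      simp only [branchCost, hx' d hdI, not_not.mp hd, sub_self]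
  rw [sum_const, nsmul_eq_mul] at hgain
  linarith

end Likelihood

section Splicing

variable {K : Type*} [Field K] [DecidableEq K] {k n ν : ℕ} {G : ℕ → Matrix (Fin k) (Fin n) K}
  {gq : K → ℝ} {r : ℤ → EuclideanSpace ℝ (Fin n)} {dmax2 ξ : ℝ} {M : ℤ} {x₀ xs : ℤ → Fin k → K}

theorem exists_left_splice_point
    (hobs : ∀ e, xs e ≠ x₀ e → ∃ d, e ≤ d ∧ d < e + ν ∧ cw k n ν G xs d ≠ cw k n ν G x₀ d)
    (hdmax : ∀ y1 y2 : Fin n → K, ‖gmap n gq y1 - gmap n gq y2‖ ^ 2 ≤ dmax2) (hξ : 0 ≤ ξ)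
    (hM : 0 ≤ M) {m : ℤ}
    (h3 : ∑ d ∈ Ico (m - (2 * M + 1) * ν) (m - 2 * M * ν), branchCost ν G gq r x₀ d ≤
      M * ξ - ν * dmax2) :
    ∃ a, m - (2 * M + 1) * ν ≤ a ∧ m - 2 * M * ν ≤ a + ν ∧ a + ν ≤ m ∧
      ∀ b, ∑ d ∈ Ico a (a + ν), (branchCost ν G gq r ((Set.Ico a b).piecewise x₀ xs) d -
          branchCost ν G gq r xs d) ≤
        2 * ξ * #{d ∈ Ico (a + ν) m | cw k n ν G xs d ≠ cw k n ν G x₀ d} := by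
  lift M to ℕ using hM
  rcases exists_block_or_le_card_filter hobs (m - 2 * M * ν) M with ⟨j, hj, hagree⟩ | hcard
  · have hjM : ((j : ℤ) + 1) * ν ≤ 2 * M * ν := mul_le_mul_of_nonneg_right (by omega) (by positivity)
    have hj : (0 : ℤ) ≤ j * ν := by positivity
    refine ⟨m - 2 * M * ν + j * ν, by linarith, by linarith, by linarith, fun b =>
      (sum_branchCost_sub_eq_zero fun d hd =>
        cw_piecewise_of_eqOn_inter _ fun e he => ?_).trans_le (by positivity)⟩
    simp only [mem_Ico, Set.mem_inter_iff, Set.mem_Ico, Set.mem_Ioc] at hd he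
    exact (not_not.mp (hagree e (by linarith) (by linarith))).symm
  · have hm : m - 2 * M * ν + M * (2 * ν) = m := by ring
    have ha : m - (2 * M + 1) * ν + ν = m - 2 * M * ν := by ring
    have hMν : (0 : ℤ) ≤ 2 * M * ν := by positivity
    rw [hm] at hcard
    refine ⟨m - (2 * M + 1) * ν, le_rfl, ha.ge, by linarith, fun b =>
      sum_branchCost_sub_le_of_sum_le (x₀ := x₀) (M := M) hdmax hξ (by simp) ?_ ?_⟩
    · rwa [ha]
    · rw [ha]; exact_mod_cast hcard

theorem exists_right_splice_point
    (hobs : ∀ e, xs e ≠ x₀ e → ∃ d, e ≤ d ∧ d < e + ν ∧ cw k n ν G xs d ≠ cw k n ν G x₀ d)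
    (hdmax : ∀ y1 y2 : Fin n → K, ‖gmap n gq y1 - gmap n gq y2‖ ^ 2 ≤ dmax2) (hξ : 0 ≤ ξ)
    (hM : 1 ≤ M) {m mt : ℤ} (hmt₁ : m ≤ mt) (hmt₂ : mt < m + ν) (hne : xs mt ≠ x₀ mt)
    (h2 : ∑ d ∈ Ico (m + 2 * M * ν) (m + (2 * M + 1) * ν), branchCost ν G gq r x₀ d ≤
      M * ξ - ν * dmax2) :
    ∃ b, m + 2 * ν ≤ b ∧ b ≤ m + 2 * M * ν ∧
      ∀ a, ∑ d ∈ Ico b (b + ν), (branchCost ν G gq r ((Set.Ico a b).piecewise x₀ xs) d -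
          branchCost ν G gq r xs d) ≤
        2 * ξ * #{d ∈ Ico m b | cw k n ν G xs d ≠ cw k n ν G x₀ d} := by
  lift M to ℕ using (by omega)
  rcases exists_block_or_le_card_filter hobs m M with ⟨j, hj, hagree⟩ | hcard
  · have hj₀ : 1 ≤ j := Nat.one_le_iff_ne_zero.mpr <| by
      rintro rfl
      exact hagree mt (by simpa) (by simpa) hne
    have hj₁ : (2 : ℤ) * ν ≤ (j + 1) * ν := mul_le_mul_of_nonneg_right (by omega) (by positivity)
    have hjM : ((j : ℤ) + 1) * ν ≤ 2 * M * ν := mul_le_mul_of_nonneg_right (by omega) (by positivity)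
    refine ⟨m + (j + 1) * ν, by linarith, by linarith, fun a =>
      (sum_branchCost_sub_eq_zero fun d hd =>
        cw_piecewise_of_eqOn_inter _ fun e he => ?_).trans_le (by positivity)⟩
    simp only [mem_Ico, Set.mem_inter_iff, Set.mem_Ico, Set.mem_Ioc] at hd he
    exact (not_not.mp (hagree e (by linarith) (by linarith))).symm
  · have hm : m + M * (2 * ν) = m + 2 * M * ν := by ring
    have hb : m + 2 * M * ν + ν = m + (2 * M + 1) * ν := by ring
    have hM₂ : (2 : ℤ) * ν ≤ 2 * M * ν := by nlinarith
    rw [hm] at hcard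
    refine ⟨m + 2 * M * ν, by linarith, le_rfl, fun a =>
      sum_branchCost_sub_le_of_sum_le (x₀ := x₀) (M := M) hdmax hξ (by simp) ?_ ?_⟩
    · rwa [hb]
    · exact_mod_cast hcard

end Splicing

theorem stmt_0_general {K : Type*} [Field K] [DecidableEq K]
    (k n ν N : ℕ)
    (G : ℕ → Matrix (Fin k) (Fin n) K)
    (gq : K → ℝ) (hgq : Function.Injective gq)
    (dmin2 dmax2 : ℝ)
    (hdmin2 : IsLeast {t : ℝ | ∃ y1 y2 : Fin n → K, y1 ≠ y2 ∧
      t = ‖gmap n gq y1 - gmap n gq y2‖ ^ 2} dmin2)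
    (hdmax2 : IsGreatest {t : ℝ | ∃ y1 y2 : Fin n → K, y1 ≠ y2 ∧
      t = ‖gmap n gq y1 - gmap n gq y2‖ ^ 2} dmax2)
    (r : ℤ → EuclideanSpace ℝ (Fin n))
    -- ν-observability of the (minimal) encoder
    (hobs : ∀ x xt : ℤ → Fin k → K, IsMsg k N x → IsMsg k N xt →
      ∀ m : ℤ, x m ≠ xt m →
        ∃ mt : ℤ, m ≤ mt ∧ mt < m + (ν : ℤ) ∧ cw k n ν G x mt ≠ cw k n ν G xt mt)
    (ξ : ℝ) (hξ1 : 0 < ξ)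
    (M : ℤ) (hM : (ν : ℝ) * dmax2 / ξ < (M : ℝ))
    (x₀ : ℤ → Fin k → K) (hx₀ : IsMsg k N x₀)
    (m : ℤ)
    (hw1 : 0 ≤ m - (2 * M + 1) * ν) (hw2 : m + (2 * M + 1) * ν ≤ (N : ℤ) + ν)
    (h1 : ∀ d : ℤ, m - 2 * M * ν ≤ d → d < m + 2 * M * ν →
      ‖r d - gmap n gq (cw k n ν G x₀ d)‖ < (dmin2 - 2 * ξ) / (2 * Real.sqrt dmin2))
    (h2 : ∑ d ∈ Finset.Ico (m + 2 * M * ν) (m + (2 * M + 1) * ν),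
        ‖r d - gmap n gq (cw k n ν G x₀ d)‖ ^ 2 ≤ (M : ℝ) * ξ - (ν : ℝ) * dmax2)
    (h3 : ∑ d ∈ Finset.Ico (m - (2 * M + 1) * ν) (m - 2 * M * ν),
        ‖r d - gmap n gq (cw k n ν G x₀ d)‖ ^ 2 ≤ (M : ℝ) * ξ - (ν : ℝ) * dmax2) :
    ∀ xs : ℤ → Fin k → K, IsMsg k N xs →
      (∀ x' : ℤ → Fin k → K, IsMsg k N x' →
        negSLL k n ν N G gq r xs ≤ negSLL k n ν N G gq r x') →
      ∀ mt : ℤ, m ≤ mt → mt < m + (ν : ℤ) → xs mt = x₀ mt := by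
  intro xs hxs hmin mt hmt₁ hmt₂
  by_contra hne
  have hdmax := sq_norm_gmap_sub_le_of_isGreatest hdmax2
  have hM₁ : 1 ≤ M := by
    have : (0 : ℝ) < M := (div_nonneg (mul_nonneg ν.cast_nonneg ((sq_nonneg _).trans (hdmax 0 0)))
      hξ1.le).trans_lt hM
    exact Int.cast_pos.mp this
  have hobs' := hobs xs x₀ hxs hx₀
  obtain ⟨a, ha₁, ha₂, ha₃, hleft⟩ := exists_left_splice_point hobs' hdmax hξ1.le (by omega) h3
  obtain ⟨b, hb₁, hb₂, hright⟩ := exists_right_splice_point hobs' hdmax hξ1.le hM₁ hmt₁ hmt₂ hne h2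
  obtain ⟨d, hd₁, hd₂, hd⟩ := hobs' mt hne
  have hmid := sum_branchCost_sub_lt (r := r) (x := xs) (I := Ico (a + ν) b)
    (x' := (Set.Ico a b).piecewise x₀ xs) (pos_of_isLeast_sqDists hgq hdmin2)
    (fun y1 y2 h => hdmin2.2 ⟨y1, y2, h, rfl⟩) hξ1.le
    (fun d hd => cw_piecewise_of_subset fun e he => by
      simp only [mem_Ico, Set.mem_Ioc, Set.mem_Ico] at hd he ⊢
      omega)
    (fun d hd => h1 d (by linarith [(mem_Ico.mp hd).1]) (by linarith [(mem_Ico.mp hd).2]))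
    ⟨d, mem_filter.mpr ⟨mem_Ico.mpr ⟨by omega, by omega⟩, hd⟩⟩
  rw [← card_filter_Ico_add_card_filter_Ico ha₃ (by omega)] at hmid
  have hS := negSLL_piecewise_sub (G := G) (gq := gq) (r := r) x₀ xs (by omega : 0 ≤ a)
    (by omega : a + ν ≤ b) (by linarith : b ≤ N)
  have hopt := hmin _ (isMsg_piecewise hx₀ hxs (Set.Ico a b))
  push_cast at hmid
  linarith [hleft b, hright a]

/-- Theorem 1: the neighboring-log-likelihood optimality test for convolutional
codes (with the precise constants from the proof via Theorem 3). If the NLL test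
conditions hold around time `m` for a message `x₀`, then every ML message agrees
with `x₀` on `[m, m + ν)`. -/
theorem stmt_0 {K : Type*} [Field K] [Fintype K] [DecidableEq K]
    (k n ν N : ℕ) (hk : 1 ≤ k) (hn : 1 ≤ n) (hν : 1 ≤ ν) (hN : 1 ≤ N)
    (G : ℕ → Matrix (Fin k) (Fin n) K)
    (gq : K → ℝ) (hgq : Function.Injective gq)
    (hcard : ∃ y1 y2 : Fin n → K, y1 ≠ y2)
    (dmin2 dmax2 : ℝ)
    (hdmin2 : IsLeast {t : ℝ | ∃ y1 y2 : Fin n → K, y1 ≠ y2 ∧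
      t = ‖gmap n gq y1 - gmap n gq y2‖ ^ 2} dmin2)
    (hdmax2 : IsGreatest {t : ℝ | ∃ y1 y2 : Fin n → K, y1 ≠ y2 ∧
      t = ‖gmap n gq y1 - gmap n gq y2‖ ^ 2} dmax2)
    (r : ℤ → EuclideanSpace ℝ (Fin n))
    -- ν-observability of the (minimal) encoder
    (hobs : ∀ x xt : ℤ → Fin k → K, IsMsg k N x → IsMsg k N xt →
      ∀ m : ℤ, x m ≠ xt m →
        ∃ mt : ℤ, m ≤ mt ∧ mt < m + (ν : ℤ) ∧ cw k n ν G x mt ≠ cw k n ν G xt mt)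
    (ξ : ℝ) (hξ1 : 0 < ξ) (hξ2 : ξ < dmin2 / 2)
    (M : ℤ) (hM : (ν : ℝ) * dmax2 / ξ < (M : ℝ))
    (x₀ : ℤ → Fin k → K) (hx₀ : IsMsg k N x₀)
    (m : ℤ)
    (hw1 : 0 ≤ m - (2 * M + 1) * ν) (hw2 : m + (2 * M + 1) * ν ≤ (N : ℤ) + ν)
    (hw3 : 0 ≤ m) (hw4 : m + (ν : ℤ) ≤ (N : ℤ))
    (h1 : ∀ d : ℤ, m - 2 * M * ν ≤ d → d < m + 2 * M * ν →
      ‖r d - gmap n gq (cw k n ν G x₀ d)‖ < (dmin2 - 2 * ξ) / (2 * Real.sqrt dmin2))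
    (h2 : ∑ d ∈ Finset.Ico (m + 2 * M * ν) (m + (2 * M + 1) * ν),
        ‖r d - gmap n gq (cw k n ν G x₀ d)‖ ^ 2 ≤ (M : ℝ) * ξ - (ν : ℝ) * dmax2)
    (h3 : ∑ d ∈ Finset.Ico (m - (2 * M + 1) * ν) (m - 2 * M * ν),
        ‖r d - gmap n gq (cw k n ν G x₀ d)‖ ^ 2 ≤ (M : ℝ) * ξ - (ν : ℝ) * dmax2) :
    ∀ xs : ℤ → Fin k → K, IsMsg k N xs →
      (∀ x' : ℤ → Fin k → K, IsMsg k N x' →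
        negSLL k n ν N G gq r xs ≤ negSLL k n ν N G gq r x') →
      ∀ mt : ℤ, m ≤ mt → mt < m + (ν : ℤ) → xs mt = x₀ mt :=
  stmt_0_general k n ν N G gq hgq dmin2 dmax2 hdmin2 hdmax2 r hobs ξ hξ1 M hM x₀ hx₀ m hw1 hw2 h1 h2
    h3
end

section
/- Assume: (i) exact-ν reachability: for all u₁, u₂ ∈ U there exist states w₀ = u₂, w₁, …, w_ν = u₁ with P_t(w_{i+1}|w_i) > 0 for 0 ≤ i < ν; (ii) ν-observability: for any two feasible state sequences u, ũ and any index d, if u[d] ≠ ũ[d] then there exists m̃ with d−ν < m̃ < d+ν and Y(u[m̃]) ≠ Y(ũ[m̃]); (iii) there are functions L_l, L_u : ℝ^n × O → ℝ such that for all r̂ ∈ ℝ^n and y₁ ∈ O: L_l(r̂, y₁) ≤ min_{y₂ ≠ y₁} [ log f(y₁, r̂) − log f(y₂, r̂) ] and L_u(r̂, y₁) ≥ max_{y₂ ≠ y₃} [ log f(y₃, r̂) − log f(y₂, r̂) ]. Let ρ > 0 be a real number, M ≥ 1 an integer, u a feasible state sequence, and m an integer with [m−(2M+1)ν, m+(2M+1)ν)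 ⊆ [0, N]. Suppose: L_l(r[d], Y(u[d])) > 3ν(ρ − log p_tr) for every d ∈ [m−2Mν, m+2Mν); Σ_{d=m+2Mν}^{m+(2M+1)ν−1} L_u(r[d], Y(u[d])) ≤ 3Mνρ + (ν+1)·log p_tr; and Σ_{d=m−(2M+1)ν}^{m−2Mν−1} L_u(r[d], Y(u[d])) ≤ 3Mνρ + ν·log p_tr. Then every ML sequence u* satisfies u*[m+ν−1] = u[m+ν−1]. -/
/-
Suppose an ML sequence `us` differs from `u` at `c = m + ν - 1`, and let `[p, q]` be the maximal
block around `c` on which they differ. Put `a = m - 2Mν`, `b = m + 2Mν`. The competitor `v`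
follows `u` on `[p, q] ∩ [a, b)` and `us` elsewhere; where the block sticks out of the window,
exact-`ν` reachability provides a `ν`-step bridge between the two sequences, paid for by the
`L_u` budgets on `[a - ν, a)` and `[b, b + ν)`.

By `ν`-observability, applied to `u` and `u` patched with `us` on `[p, q]`, every time of the
block lies within distance `< ν` of a time of the block where `Y ∘ u` and `Y ∘ us` differ. If
`K` such mismatches lie in the window, the block part they cover has length `≤ K (2ν - 1)`, which
gives `K ≥ M` for each window edge crossed by the block and `3νK ≥` the number of changed
transitions. Each mismatch gains more than `3ν(ρ - log p_tr)` by `L_l`, each changed transition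
loses at most `-log p_tr`, so `S(v) < S(us)`.
-/

open Finset

/-- A state sequence of the hidden Markov system: zero outside `[0, N)` and all
transitions have positive weight. `Pt u1 u2` is the weight of the transition
from `u2` to `u1` (i.e. `P{next = u1 | current = u2}`). -/
def HMMFeasible {U : Type*} [Zero U] (N : ℕ) (Pt : U → U → ℝ) (u : ℤ → U) : Prop :=
  (∀ d : ℤ, d < 0 ∨ (N : ℤ) ≤ d → u d = 0) ∧ ∀ d : ℤ, 0 < Pt (u d) (u (d - 1))

/-- Negative sum log likelihood `S(u) = -∑_{d=0}^{N} log(f(Y(u[d]), r[d]) · P_t(u[d]|u[d-1]))`. -/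
noncomputable def HMMnSLL {U O : Type*} (N : ℕ) (Pt : U → U → ℝ) (Y : U → O)
    {n : ℕ} (f : O → EuclideanSpace ℝ (Fin n) → ℝ)
    (r : ℤ → EuclideanSpace ℝ (Fin n)) (u : ℤ → U) : ℝ :=
  - ∑ d ∈ Finset.Icc (0 : ℤ) (N : ℤ),
      Real.log (f (Y (u d)) (r d) * Pt (u d) (u (d - 1)))

theorem Finset.sum_Ico_consecutive' {α M : Type*} [LinearOrder α] [LocallyFiniteOrder α]
    [AddCommMonoid M] (f : α → M) {a b c : α} (hab : a ≤ b) (hbc : b ≤ c) :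
    ∑ i ∈ Ico a b, f i + ∑ i ∈ Ico b c, f i = ∑ i ∈ Ico a c, f i := by
  rw [← sum_union (Ico_disjoint_Ico_consecutive a b c), Ico_union_Ico_eq_Ico hab hbc]

theorem Int.card_le_card_mul_of_forall_exists_abs_sub_lt {s T : Finset ℤ} {R : ℕ}
    (h : ∀ d ∈ s, ∃ t ∈ T, |d - t| < R) : #s ≤ #T * (2 * R - 1) := by
  classical
  calc #s ≤ #(T.biUnion fun t => Ioo (t - R) (t + R)) := by
        refine card_le_card fun d hd => ?_
        obtain ⟨t, ht, hdt⟩ := h d hd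
        rw [abs_sub_lt_iff] at hdt
        exact mem_biUnion.2 ⟨t, ht, mem_Ioo.2 ⟨by omega, by omega⟩⟩
    _ ≤ ∑ t ∈ T, #(Ioo (t - R) (t + R)) := card_biUnion_le
    _ = #T * (2 * R - 1) := by
        rw [sum_const_nat (m := 2 * R - 1) fun t _ => by rw [Int.card_Ioo]; omega]

theorem Int.exists_maximal_Icc_of_not {P : ℤ → Prop} {x c y : ℤ} (hx : P x) (hc : ¬P c)
    (hy : P y) (hxc : x ≤ c) (hcy : c ≤ y) :
    ∃ p q, p ≤ c ∧ c ≤ q ∧ P (p - 1) ∧ P (q + 1) ∧ ∀ d, p ≤ d → d ≤ q → ¬P d := by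
  obtain ⟨g, ⟨hgc, hg⟩, hgmax⟩ := Int.exists_greatest_of_bdd (P := fun z => z ≤ c ∧ P z)
    ⟨c, fun z hz => hz.1⟩ ⟨x, hxc, hx⟩
  obtain ⟨h, ⟨hch, hh⟩, hhmin⟩ := Int.exists_least_of_bdd (P := fun z => c ≤ z ∧ P z)
    ⟨c, fun z hz => hz.1⟩ ⟨y, hcy, hy⟩
  have hgc' : g < c := lt_of_le_of_ne hgc fun h => hc (h ▸ hg)
  have hch' : c < h := lt_of_le_of_ne hch fun h' => hc (h' ▸ hh)
  refine ⟨g + 1, h - 1, by omega, by omega, by simpa using hg, by simpa using hh,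
    fun d hd1 hd2 hd => ?_⟩
  rcases le_total d c with hdc | hcd
  · have := hgmax d ⟨hdc, hd⟩; omega
  · have := hhmin d ⟨hcd, hd⟩; omega

section Sequences

variable {U : Type*} {Pt : U → U → ℝ}

theorem piecewise_Iio_of_lt {x y : ℤ → U} {k d : ℤ} (h : d < k) :
    (Set.Iio k).piecewise x y d = x d :=
  Set.piecewise_eq_of_mem _ _ _ (Set.mem_Iio.2 h)

theorem piecewise_Iio_of_le {x y : ℤ → U} {k d : ℤ} (h : k ≤ d) :
    (Set.Iio k).piecewise x y d = y d :=
  Set.piecewise_eq_of_notMem _ _ _ (Set.notMem_Iio.2 h)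

theorem transition_pos_piecewise {x y : ℤ → U} {k : ℤ} (hxy : x (k - 1) = y (k - 1)) (d : ℤ)
    (hx : d < k → 0 < Pt (x d) (x (d - 1))) (hy : k ≤ d → 0 < Pt (y d) (y (d - 1))) :
    0 < Pt ((Set.Iio k).piecewise x y d) ((Set.Iio k).piecewise x y (d - 1)) := by
  by_cases hd : d < k
  · rw [piecewise_Iio_of_lt hd, piecewise_Iio_of_lt (show d - 1 < k by omega)]
    exact hx hd
  rw [piecewise_Iio_of_le (not_lt.1 hd)]
  by_cases hd1 : d - 1 < k
  · obtain rfl : d = k := by omega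
    rw [piecewise_Iio_of_lt hd1, hxy]
    exact hy le_rfl
  · rw [piecewise_Iio_of_le (not_lt.1 hd1)]
    exact hy (by omega)

def ExactReachable (Pt : U → U → ℝ) (ν : ℕ) : Prop :=
  ∀ u1 u2 : U, ∃ w : ℕ → U, w 0 = u2 ∧ w ν = u1 ∧ ∀ i < ν, 0 < Pt (w (i + 1)) (w i)

variable [Zero U] {N ν : ℕ}

theorem HMMFeasible.piecewise {x y : ℤ → U} (hx : HMMFeasible N Pt x) (hy : HMMFeasible N Pt y)
    {k : ℤ} (hxy : x (k - 1) = y (k - 1)) : HMMFeasible N Pt ((Set.Iio k).piecewise x y) := by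
  refine ⟨fun d hd => ?_, fun d => transition_pos_piecewise hxy d (fun _ => hx.2 d)
    (fun _ => hy.2 d)⟩
  by_cases hdk : d < k
  · rw [piecewise_Iio_of_lt hdk, hx.1 d hd]
  · rw [piecewise_Iio_of_le (not_lt.1 hdk), hy.1 d hd]

theorem exists_bridge (hreach : ExactReachable Pt ν) {x y : ℤ → U} (hx : HMMFeasible N Pt x) (hy : HMMFeasible N Pt y) {k : ℤ}
    (hk : (ν : ℤ) ≤ k) (hkN : k ≤ N + 1) :
    ∃ w, HMMFeasible N Pt w ∧ (∀ d < k - ν, w d = x d) ∧ ∀ d, k - 1 ≤ d → w d = y d := by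
  obtain ⟨π, hπ0, hπν, hπ⟩ := hreach (y (k - 1)) (x (k - ν - 1))
  -- the path `π` is laid out on `[k - ν - 1, k - 1]`
  set z : ℤ → U := fun d => π (d - (k - ν - 1)).toNat
  set w₁ := (Set.Iio k).piecewise z y
  have hzy : z (k - 1) = y (k - 1) := by
    simp only [z, show (k - 1 - (k - ν - 1)).toNat = ν by omega, hπν]
  have hxw₁ : x (k - ν - 1) = w₁ (k - ν - 1) := by
    rw [show w₁ (k - ν - 1) = z (k - ν - 1) from piecewise_Iio_of_lt (by omega)]
    simp only [z, sub_self, Int.toNat_zero, hπ0]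
  have hw₁ : ∀ d, k - ν ≤ d → 0 < Pt (w₁ d) (w₁ (d - 1)) := fun d hd =>
    transition_pos_piecewise hzy d (fun hdk => by
      simp only [z, show (d - (k - ν - 1)).toNat = (d - 1 - (k - ν - 1)).toNat + 1 by omega]
      exact hπ _ (by omega)) (fun _ => hy.2 d)
  set w := (Set.Iio (k - ν)).piecewise x w₁
  have hwx : ∀ d < k - ν, w d = x d := fun d hd => piecewise_Iio_of_lt hd
  have hwy : ∀ d, k - 1 ≤ d → w d = y d := by
    intro d hd
    by_cases hdν : d < k - ν
    · obtain rfl : ν = 0 := by omega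
      obtain rfl : d = k - 1 := by omega
      rw [Nat.cast_zero, sub_zero] at hπ0
      rw [hwx _ hdν, ← hπ0, hπν]
    · rw [show w d = w₁ d from piecewise_Iio_of_le (not_lt.1 hdν)]
      by_cases hdk : d < k
      · rw [show w₁ d = z d from piecewise_Iio_of_lt hdk, show d = k - 1 by omega, hzy]
      · exact piecewise_Iio_of_le (not_lt.1 hdk)
  refine ⟨w, ⟨fun d hd => ?_, fun d => transition_pos_piecewise hxw₁ d (fun _ => hx.2 d)
    (hw₁ d)⟩, hwx, hwy⟩
  rcases hd with hd | hd
  · rw [hwx d (by omega), hx.1 d (Or.inl hd)]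
  · rw [hwy d (by omega), hy.1 d (Or.inr hd)]

variable {u us : ℤ → U}

theorem exists_left_patch (hreach : ExactReachable Pt ν) (hu : HMMFeasible N Pt u) (hus : HMMFeasible N Pt us) {p a : ℤ}
    (hp : us (p - 1) = u (p - 1)) (ha : (ν : ℤ) ≤ a) (haN : a ≤ N + 1) :
    ∃ w, HMMFeasible N Pt w ∧ (∀ d, max p a ≤ d → w d = u d) ∧ (∀ d < a - ν, w d = us d) ∧
      (a ≤ p → ∀ d < p, w d = us d) := by
  by_cases hpa : p < a
  · obtain ⟨w, hw, hwus, hwu⟩ := exists_bridge hreach hus hu ha haN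
    exact ⟨w, hw, fun d hd => hwu d (by omega), hwus, fun h => absurd h (not_le.2 hpa)⟩
  · exact ⟨_, hus.piecewise hu hp, fun d hd => piecewise_Iio_of_le (by omega),
      fun d hd => piecewise_Iio_of_lt (by omega), fun _ d hd => piecewise_Iio_of_lt hd⟩

theorem exists_right_patch (hreach : ExactReachable Pt ν) (hν : 1 ≤ ν) (hu : HMMFeasible N Pt u) (hus : HMMFeasible N Pt us) {q b : ℤ}
    (hq : u (q + 1) = us (q + 1)) (hb : 0 ≤ b) (hbN : b + ν ≤ N + 1) :
    ∃ w, HMMFeasible N Pt w ∧ (∀ d ≤ min q (b - 1), w d = u d) ∧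
      (∀ d, b + ν - 1 ≤ d → w d = us d) ∧ (q < b → ∀ d, q < d → w d = us d) := by
  by_cases hbq : b ≤ q
  · obtain ⟨w, hw, hwu, hwus⟩ := exists_bridge hreach hu hus (k := b + ν) (by omega) hbN
    exact ⟨w, hw, fun d hd => hwu d (by omega), fun d hd => hwus d (by omega),
      fun h => absurd hbq (not_le.2 h)⟩
  · have hq' : u (q + 2 - 1) = us (q + 2 - 1) := by rwa [show q + 2 - 1 = q + 1 by ring]
    have hright : ∀ d, q < d → (Set.Iio (q + 2)).piecewise u us d = us d := fun d hd => by
      rcases lt_or_ge d (q + 2) with hd2 | hd2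
      · rw [piecewise_Iio_of_lt hd2, show d = q + 1 by omega, hq]
      · exact piecewise_Iio_of_le hd2
    exact ⟨_, hu.piecewise hus hq', fun d hd => piecewise_Iio_of_lt (by omega),
      fun d hd => hright d (by omega), fun _ => hright⟩

theorem exists_competitor (hreach : ExactReachable Pt ν) (hν : 1 ≤ ν) (hu : HMMFeasible N Pt u) (hus : HMMFeasible N Pt us) {p q a b : ℤ}
    (hp : u (p - 1) = us (p - 1)) (hq : u (q + 1) = us (q + 1)) (ha : (ν : ℤ) ≤ a)
    (hbN : b + ν ≤ N + 1) (hpq : max p a ≤ min q (b - 1)) :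
    ∃ v, HMMFeasible N Pt v ∧ (∀ d, max p a ≤ d → d ≤ min q (b - 1) → v d = u d) ∧
      (∀ d < a - ν, v d = us d) ∧ (a ≤ p → ∀ d < p, v d = us d) ∧
      (∀ d, b + ν - 1 ≤ d → v d = us d) ∧ (q < b → ∀ d, q < d → v d = us d) := by
  obtain ⟨wL, hwL, hwLu, hwLus, hwLus'⟩ :=
    exists_left_patch hreach hu hus hp.symm ha (by omega)
  obtain ⟨wR, hwR, hwRu, hwRus, hwRus'⟩ :=
    exists_right_patch hreach hν hu hus hq (b := b) (by omega) hbN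
  have hLR : wL (max p a + 1 - 1) = wR (max p a + 1 - 1) := by
    rw [add_sub_cancel_right, hwLu _ le_rfl, hwRu _ hpq]
  refine ⟨_, hwL.piecewise hwR hLR, fun d hd1 hd2 => ?_, fun d hd => ?_, fun h d hd => ?_,
    fun d hd => ?_, fun h d hd => ?_⟩
  · rcases lt_or_ge d (max p a + 1) with hd | hd
    · rw [piecewise_Iio_of_lt hd, hwLu d hd1]
    · rw [piecewise_Iio_of_le hd, hwRu d hd2]
  · rw [piecewise_Iio_of_lt (by omega), hwLus d hd]
  · rw [piecewise_Iio_of_lt (by omega), hwLus' h d hd]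
  · rw [piecewise_Iio_of_le (by omega), hwRus d hd]
  · rw [piecewise_Iio_of_le (by omega), hwRus' h d hd]

theorem exists_mismatch_near {O : Type*} {Y : U → O}
    (hobs : ∀ u v : ℤ → U, HMMFeasible N Pt u → HMMFeasible N Pt v →
      ∀ d : ℤ, u d ≠ v d →
        ∃ mt : ℤ, d - (ν : ℤ) < mt ∧ mt < d + (ν : ℤ) ∧ Y (u mt) ≠ Y (v mt))
    (hu : HMMFeasible N Pt u) (hus : HMMFeasible N Pt us) {p q d : ℤ}
    (hp : u (p - 1) = us (p - 1)) (hq : u (q + 1) = us (q + 1)) (hpd : p ≤ d) (hdq : d ≤ q)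
    (hd : u d ≠ us d) : ∃ t, p ≤ t ∧ t ≤ q ∧ |d - t| < ν ∧ Y (u t) ≠ Y (us t) := by
  -- `w` replaces `u` by `us` on `[p, q]` only
  set w₁ := (Set.Iio (q + 2)).piecewise us u
  have hw₁ : HMMFeasible N Pt w₁ :=
    hus.piecewise hu (by rw [show q + 2 - 1 = q + 1 by ring, hq])
  have hw₁us : ∀ t < q + 2, w₁ t = us t := fun t ht => piecewise_Iio_of_lt ht
  set w := (Set.Iio p).piecewise u w₁
  have hw : HMMFeasible N Pt w := hu.piecewise hw₁ (by rw [hw₁us _ (by omega), hp])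
  have hwus : ∀ t, p ≤ t → t ≤ q → w t = us t := fun t ht1 ht2 => by
    rw [show w t = w₁ t from piecewise_Iio_of_le ht1, hw₁us t (by omega)]
  have hwu : ∀ t, t < p ∨ q < t → w t = u t := by
    rintro t (ht | ht)
    · exact piecewise_Iio_of_lt ht
    rw [show w t = w₁ t from piecewise_Iio_of_le (by omega)]
    rcases lt_or_ge t (q + 2) with ht2 | ht2
    · rw [hw₁us t ht2, show t = q + 1 by omega, hq]
    · exact piecewise_Iio_of_le ht2
  obtain ⟨t, ht1, ht2, hY⟩ := hobs u w hu hw d (by rwa [hwus d hpd hdq])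
  have htpq : p ≤ t ∧ t ≤ q := by
    by_contra h
    exact hY (by rw [hwu t (by omega)])
  refine ⟨t, htpq.1, htpq.2, abs_sub_lt_iff.2 ⟨by omega, by omega⟩, ?_⟩
  rwa [hwus t htpq.1 htpq.2] at hY

end Sequences

section LogLikelihood

variable {U O X : Type*} {Pt : U → U → ℝ} {Y : U → O} {f : O → X → ℝ} {r : ℤ → X}
  {ptr : ℝ} {v w : ℤ → U} {Lu : X → O → ℝ}

def IsMinTransitionRatio (Pt : U → U → ℝ) (ptr : ℝ) : Prop :=
  IsLeast {t : ℝ | ∃ u1 u2 u3 u4 : U, 0 < Pt u1 u2 ∧ 0 < Pt u3 u4 ∧ t = Pt u1 u2 / Pt u3 u4} ptr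

theorem IsMinTransitionRatio.log_le_log_sub_log (hptr : IsMinTransitionRatio Pt ptr)
    {u1 u2 u3 u4 : U} (h12 : 0 < Pt u1 u2) (h34 : 0 < Pt u3 u4) :
    Real.log ptr ≤ Real.log (Pt u1 u2) - Real.log (Pt u3 u4) := by
  obtain ⟨_, _, _, _, ha, hb, h⟩ := hptr.1
  rw [← Real.log_div h12.ne' h34.ne']
  exact Real.log_le_log (h ▸ div_pos ha hb) (hptr.2 ⟨u1, u2, u3, u4, h12, h34, rfl⟩)

theorem IsMinTransitionRatio.log_nonpos (hptr : IsMinTransitionRatio Pt ptr) :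
    Real.log ptr ≤ 0 := by
  obtain ⟨u1, u2, _, _, h, _, _⟩ := hptr.1
  simpa using hptr.log_le_log_sub_log h h

theorem neg_le_log_sub_log_of_forall_le
    (hLu : ∀ x y1 y2 y3, y2 ≠ y3 → Real.log (f y3 x) - Real.log (f y2 x) ≤ Lu x y1)
    (hO : ∃ y y' : O, y ≠ y') (x : X) (y1 y2 y3 : O) :
    -Lu x y1 ≤ Real.log (f y2 x) - Real.log (f y3 x) := by
  obtain ⟨y, y', hy⟩ := hO
  by_cases h : y2 = y3
  · have := hLu x y1 y y' hy
    have := hLu x y1 y' y hy.symm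
    rw [h, sub_self]
    linarith
  · linarith [hLu x y1 y2 y3 h]

noncomputable def stepLogLik (Pt : U → U → ℝ) (Y : U → O) (f : O → X → ℝ) (r : ℤ → X)
    (w : ℤ → U) (d : ℤ) : ℝ :=
  Real.log (f (Y (w d)) (r d)) + Real.log (Pt (w d) (w (d - 1)))

theorem HMMnSLL_eq_neg_sum_stepLogLik {n N : ℕ} {f : O → EuclideanSpace ℝ (Fin n) → ℝ}
    {r : ℤ → EuclideanSpace ℝ (Fin n)} (hf : ∀ y x, 0 < f y x)
    (hw : ∀ d, 0 < Pt (w d) (w (d - 1))) :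
    HMMnSLL N Pt Y f r w = -∑ d ∈ Icc (0 : ℤ) N, stepLogLik Pt Y f r w d := by
  unfold HMMnSLL stepLogLik
  congr 1
  exact sum_congr rfl fun d _ => Real.log_mul (hf _ _).ne' (hw d).ne'

theorem stepLogLik_sub_eq_zero {d : ℤ} (h : v d = w d) (h' : v (d - 1) = w (d - 1)) :
    stepLogLik Pt Y f r v d - stepLogLik Pt Y f r w d = 0 := by
  simp only [stepLogLik, h, h', sub_self]

theorem log_ptr_add_le_stepLogLik_sub (hptr : IsMinTransitionRatio Pt ptr) {d : ℤ}
    (hv : 0 < Pt (v d) (v (d - 1))) (hw : 0 < Pt (w d) (w (d - 1))) :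
    Real.log ptr + (Real.log (f (Y (v d)) (r d)) - Real.log (f (Y (w d)) (r d))) ≤
      stepLogLik Pt Y f r v d - stepLogLik Pt Y f r w d := by
  have := hptr.log_le_log_sub_log hv hw
  unfold stepLogLik
  linarith

theorem card_mul_log_ptr_sub_sum_le_sum_stepLogLik_sub (hptr : IsMinTransitionRatio Pt ptr)
    (hLu : ∀ x y1 y2 y3, y2 ≠ y3 → Real.log (f y3 x) - Real.log (f y2 x) ≤ Lu x y1)
    (hO : ∃ y y' : O, y ≠ y') (hv : ∀ d, 0 < Pt (v d) (v (d - 1)))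
    (hw : ∀ d, 0 < Pt (w d) (w (d - 1))) (g : ℤ → O) (s : Finset ℤ) :
    #s * Real.log ptr - ∑ e ∈ s, Lu (r e) (g e) ≤
      ∑ e ∈ s, (stepLogLik Pt Y f r v e - stepLogLik Pt Y f r w e) := by
  rw [← nsmul_eq_mul, ← sum_const, ← sum_sub_distrib]
  exact sum_le_sum fun e _ => by
    linarith [log_ptr_add_le_stepLogLik_sub (f := f) (r := r) (Y := Y) hptr (hv e) (hw e),
      neg_le_log_sub_log_of_forall_le hLu hO (r e) (g e) (Y (v e)) (Y (w e))]

theorem card_mul_log_ptr_add_lt_sum_stepLogLik_sub [DecidableEq O]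
    (hptr : IsMinTransitionRatio Pt ptr) (hv : ∀ d, 0 < Pt (v d) (v (d - 1)))
    (hw : ∀ d, 0 < Pt (w d) (w (d - 1))) {u : ℤ → U} {s : Finset ℤ} {B : ℝ}
    (hvu : ∀ e ∈ s, v e = u e)
    (hgain : ∀ e ∈ s, Y (u e) ≠ Y (w e) →
      B < Real.log (f (Y (u e)) (r e)) - Real.log (f (Y (w e)) (r e)))
    (hne : (s.filter fun e => Y (u e) ≠ Y (w e)).Nonempty) :
    #s * Real.log ptr + #(s.filter fun e => Y (u e) ≠ Y (w e)) * B <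
      ∑ e ∈ s, (stepLogLik Pt Y f r v e - stepLogLik Pt Y f r w e) := by
  have hstep : ∀ e ∈ s, Real.log ptr + (Real.log (f (Y (u e)) (r e)) -
      Real.log (f (Y (w e)) (r e))) ≤ stepLogLik Pt Y f r v e - stepLogLik Pt Y f r w e :=
    fun e he => hvu e he ▸ log_ptr_add_le_stepLogLik_sub hptr (hv e) (hw e)
  have hmis : ∑ e ∈ s with Y (u e) ≠ Y (w e), (Real.log ptr + B) <
      ∑ e ∈ s with Y (u e) ≠ Y (w e), (stepLogLik Pt Y f r v e - stepLogLik Pt Y f r w e) :=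
    sum_lt_sum_of_nonempty hne fun e he => by
      rw [mem_filter] at he
      linarith [hstep e he.1, hgain e he.1 he.2]
  have hmatch : ∑ e ∈ s with ¬Y (u e) ≠ Y (w e), Real.log ptr ≤
      ∑ e ∈ s with ¬Y (u e) ≠ Y (w e), (stepLogLik Pt Y f r v e - stepLogLik Pt Y f r w e) :=
    sum_le_sum fun e he => by
      rw [mem_filter, not_ne_iff] at he
      simpa [he.2] using hstep e he.1
  rw [← sum_filter_add_sum_filter_not s fun e => Y (u e) ≠ Y (w e),
    ← card_filter_add_card_filter_not (s := s) fun e => Y (u e) ≠ Y (w e)]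
  simp only [sum_const, nsmul_eq_mul] at hmis hmatch
  push_cast
  linarith

theorem sum_Icc_stepLogLik_sub_eq_sum_Ico {N : ℕ} {x y : ℤ} (hx : 0 ≤ x) (hy : y ≤ N + 1)
    (hL : ∀ d < x, v d = w d) (hR : ∀ d, y - 1 ≤ d → v d = w d) :
    ∑ d ∈ Icc (0 : ℤ) N, (stepLogLik Pt Y f r v d - stepLogLik Pt Y f r w d) =
      ∑ d ∈ Ico x y, (stepLogLik Pt Y f r v d - stepLogLik Pt Y f r w d) := by
  refine (sum_subset (fun d hd => ?_) fun d hd hd' => ?_).symm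
  · rw [mem_Ico] at hd
    exact mem_Icc.2 ⟨by omega, by omega⟩
  · rw [mem_Ico] at hd'
    rcases lt_or_ge d x with hdx | hdy
    · exact stepLogLik_sub_eq_zero (hL d hdx) (hL _ (by omega))
    · exact stepLogLik_sub_eq_zero (hR d (by omega)) (hR _ (by omega))

theorem sum_stepLogLik_sub_left_ge (hptr : IsMinTransitionRatio Pt ptr)
    (hLu : ∀ x y1 y2 y3, y2 ≠ y3 → Real.log (f y3 x) - Real.log (f y2 x) ≤ Lu x y1)
    (hO : ∃ y y' : O, y ≠ y') (hv : ∀ d, 0 < Pt (v d) (v (d - 1)))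
    (hw : ∀ d, 0 < Pt (w d) (w (d - 1))) {u : ℤ → U} {ν : ℕ} {a p : ℤ} {B : ℝ}
    (hbudget : ∑ e ∈ Ico (a - ν) a, Lu (r e) (Y (u e)) ≤ B + ν * Real.log ptr)
    (hvw : a ≤ p → ∀ d < p, v d = w d) :
    -(if p < a then B else 0) ≤
      ∑ e ∈ Ico (a - ν) (max p a), (stepLogLik Pt Y f r v e - stepLogLik Pt Y f r w e) := by
  split_ifs with hpa
  · have := card_mul_log_ptr_sub_sum_le_sum_stepLogLik_sub (Y := Y) (r := r) hptr hLu hO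
      hv hw (fun e => Y (u e)) (Ico (a - ν) a)
    rw [Int.card_Ico, show (a - (a - ν)).toNat = ν by omega] at this
    rw [max_eq_right hpa.le]
    linarith
  · rw [neg_zero, max_eq_left (not_lt.1 hpa)]
    refine (sum_eq_zero fun e he => ?_).ge
    rw [mem_Ico] at he
    exact stepLogLik_sub_eq_zero (hvw (not_lt.1 hpa) e he.2) (hvw (not_lt.1 hpa) _ (by omega))

theorem sum_stepLogLik_sub_right_ge (hptr : IsMinTransitionRatio Pt ptr)
    (hLu : ∀ x y1 y2 y3, y2 ≠ y3 → Real.log (f y3 x) - Real.log (f y2 x) ≤ Lu x y1)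
    (hO : ∃ y y' : O, y ≠ y') (hv : ∀ d, 0 < Pt (v d) (v (d - 1)))
    (hw : ∀ d, 0 < Pt (w d) (w (d - 1))) {u : ℤ → U} {ν : ℕ} (hν : 1 ≤ ν) {b q : ℤ} {B : ℝ}
    (hbudget : ∑ e ∈ Ico b (b + ν), Lu (r e) (Y (u e)) ≤ B + (ν + 1) * Real.log ptr)
    (hvw : q < b → ∀ d, q < d → v d = w d) :
    Real.log ptr - (if b ≤ q then B else 0) ≤
      ∑ e ∈ Ico (min q (b - 1) + 1) (b + ν),
        (stepLogLik Pt Y f r v e - stepLogLik Pt Y f r w e) := by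
  split_ifs with hbq
  · have := card_mul_log_ptr_sub_sum_le_sum_stepLogLik_sub (Y := Y) (r := r) hptr hLu hO
      hv hw (fun e => Y (u e)) (Ico b (b + ν))
    rw [Int.card_Ico, show (b + ν - b).toNat = ν by omega] at this
    rw [min_eq_right (by omega), sub_add_cancel]
    linarith [hptr.log_nonpos]
  · have hqb := not_le.1 hbq
    rw [sub_zero, min_eq_left (by omega), sum_eq_single_of_mem (q + 1) (by simp; omega)
      fun e he hne => ?_]
    · simpa [hvw hqb (q + 1) (by omega)] using
        log_ptr_add_le_stepLogLik_sub (f := f) (r := r) (Y := Y) hptr (hv (q + 1)) (hw (q + 1))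
    · rw [mem_Ico] at he
      exact stepLogLik_sub_eq_zero (hvw hqb e (by omega)) (hvw hqb _ (by omega))

end LogLikelihood

/-- Where the window edge `a` (resp. `b`) cuts the block, only the times at least `ν - 1` inside
the window are sure to have a nearby mismatch in the window. -/
theorem window_cover_le {U O : Type*} [DecidableEq O] {Y : U → O} {u us : ℤ → U} {ν : ℕ}
    (hν : 1 ≤ ν) {p q a b : ℤ}
    (hnear : ∀ d, p ≤ d → d ≤ q → ∃ t, p ≤ t ∧ t ≤ q ∧ |d - t| < ν ∧ Y (u t) ≠ Y (us t)) :
    (if b ≤ q then b - ν else q) + 1 - (if p < a then a + ν - 1 else p) ≤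
      #{e ∈ Ico (max p a) (min q (b - 1) + 1) | Y (u e) ≠ Y (us e)} * (2 * ν - 1) := by
  have hcard := Int.card_le_card_mul_of_forall_exists_abs_sub_lt
    (s := Icc (if p < a then a + ν - 1 else p) (if b ≤ q then b - ν else q))
    (T := {e ∈ Ico (max p a) (min q (b - 1) + 1) | Y (u e) ≠ Y (us e)}) (R := ν)
    fun d hd => by
      rw [mem_Icc] at hd
      obtain ⟨t, hpt, htq, hdt, hY⟩ := hnear d (by split_ifs at hd <;> omega)
        (by split_ifs at hd <;> omega)
      rw [abs_sub_lt_iff] at hdt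
      exact ⟨t, mem_filter.2 ⟨mem_Ico.2 ⟨by split_ifs at hd <;> omega,
        by split_ifs at hd <;> omega⟩, hY⟩, abs_sub_lt_iff.2 hdt⟩
  rw [Int.card_Icc] at hcard
  have := Nat.cast_le (α := ℤ).2 hcard
  push_cast [Nat.cast_sub (by omega : 1 ≤ 2 * ν)] at this
  omega

/-- `p < a` (resp. `b ≤ q`) says that the block crosses the window edge `a` (resp. `b`), so that
the competitor needs a bridge there. -/
theorem window_count_bounds {ν : ℕ} {M m a b p q K : ℤ} (hν : 1 ≤ ν) (hM : 1 ≤ M)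
    (ha : a = m - 2 * M * ν) (hb : b = m + 2 * M * ν)
    (hpc : p ≤ m + ν - 1) (hcq : m + ν - 1 ≤ q)
    (hcover : (if b ≤ q then b - ν else q) + 1 - (if p < a then a + ν - 1 else p) ≤
      K * (2 * ν - 1)) :
    (if p < a then M else 0) + (if b ≤ q then M else 0) ≤ K ∧
      min q (b - 1) - max p a + 2 ≤ 3 * ν * K := by
  have hν' : (1 : ℤ) ≤ ν := by exact_mod_cast hν
  subst ha hb
  split_ifs at hcover ⊢ with hpa hbq hbq
  · rw [max_eq_right hpa.le, min_eq_right (by omega)]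
    have hK : M + M ≤ K := by nlinarith
    exact ⟨hK, by nlinarith⟩
  · rw [max_eq_right hpa.le, min_eq_left (by omega)]
    have hK : M + 0 ≤ K := by nlinarith
    exact ⟨hK, by nlinarith⟩
  · rw [max_eq_left (by omega), min_eq_right (by omega)]
    have hK : 0 + M ≤ K := by nlinarith
    exact ⟨hK, by nlinarith⟩
  · rw [max_eq_left (by omega), min_eq_left (by omega)]
    have hK : 1 ≤ K := by nlinarith
    exact ⟨by omega, by nlinarith⟩

theorem window_budget_pos {ν : ℕ} {M K l r : ℤ} {ρ L x y z : ℝ} {P Q : Prop} [Decidable P]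
    [Decidable Q] (hρ : 0 < ρ) (hL : L ≤ 0)
    (hKM : (if P then M else 0) + (if Q then M else 0) ≤ K) (hKlen : r - l + 2 ≤ 3 * ν * K)
    (hx : -(if P then 3 * (M : ℝ) * ν * ρ else 0) ≤ x)
    (hy : ((r : ℝ) + 1 - l) * L + K * (3 * ν * (ρ - L)) < y)
    (hz : L - (if Q then 3 * (M : ℝ) * ν * ρ else 0) ≤ z) :
    0 < x + (y + z) := by
  have hKlen' : (r : ℝ) - l + 2 ≤ 3 * ν * K := by exact_mod_cast hKlen
  have hKM' := (Int.cast_le (R := ℝ)).2 hKM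
  push_cast at hKM'
  split_ifs at hx hz hKM' <;>
    nlinarith [mul_nonneg (mul_nonneg (by positivity : (0 : ℝ) ≤ 3 * ν) hρ.le) (sub_nonneg.2 hKM'),
      mul_nonneg_of_nonpos_of_nonpos hL (sub_nonpos.2 hKlen')]

theorem sum_stepLogLik_sub_pos {U O X : Type*} [DecidableEq O] {Pt : U → U → ℝ} {Y : U → O}
    {f : O → X → ℝ} {r : ℤ → X} {ptr : ℝ} {N ν : ℕ} {Ll Lu : X → O → ℝ} {ρ : ℝ}
    {M m a b p q : ℤ} {u us v : ℤ → U}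
    (hptr : IsMinTransitionRatio Pt ptr)
    (hLl : ∀ x y1 y2, y2 ≠ y1 → Ll x y1 ≤ Real.log (f y1 x) - Real.log (f y2 x))
    (hLu : ∀ x y1 y2 y3, y2 ≠ y3 → Real.log (f y3 x) - Real.log (f y2 x) ≤ Lu x y1)
    (hρ : 0 < ρ) (hM : 1 ≤ M) (hν : 1 ≤ ν)
    (hv : ∀ d, 0 < Pt (v d) (v (d - 1))) (hus : ∀ d, 0 < Pt (us d) (us (d - 1)))
    (ha : a = m - 2 * M * ν) (hb : b = m + 2 * M * ν)
    (hwin1 : 0 ≤ a - ν) (hwin2 : b + ν ≤ N + 1)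
    (h1 : ∀ d, a ≤ d → d < b → 3 * (ν : ℝ) * (ρ - Real.log ptr) < Ll (r d) (Y (u d)))
    (h2 : ∑ d ∈ Ico b (b + ν), Lu (r d) (Y (u d)) ≤
      3 * (M : ℝ) * ν * ρ + (ν + 1) * Real.log ptr)
    (h3 : ∑ d ∈ Ico (a - ν) a, Lu (r d) (Y (u d)) ≤ 3 * (M : ℝ) * ν * ρ + ν * Real.log ptr)
    (hpc : p ≤ m + ν - 1) (hcq : m + ν - 1 ≤ q)
    (hnear : ∀ d, p ≤ d → d ≤ q → ∃ t, p ≤ t ∧ t ≤ q ∧ |d - t| < ν ∧ Y (u t) ≠ Y (us t))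
    (hvu : ∀ d, max p a ≤ d → d ≤ min q (b - 1) → v d = u d)
    (hvL : ∀ d < a - ν, v d = us d) (hvL' : a ≤ p → ∀ d < p, v d = us d)
    (hvR : ∀ d, b + ν - 1 ≤ d → v d = us d) (hvR' : q < b → ∀ d, q < d → v d = us d) :
    0 < ∑ d ∈ Icc (0 : ℤ) N, (stepLogLik Pt Y f r v d - stepLogLik Pt Y f r us d) := by
  have hMν : (ν : ℤ) ≤ M * ν := le_mul_of_one_le_left (by positivity) hM
  have hac : a ≤ m := by rw [ha]; linarith
  have hcb : m + 2 * ν ≤ b := by rw [hb]; linarith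
  obtain ⟨t₀, hpt₀, ht₀q, ht₀, hY₀⟩ := hnear _ hpc hcq
  rw [abs_sub_lt_iff] at ht₀
  have hO : ∃ y y' : O, y ≠ y' := ⟨_, _, hY₀⟩
  have hT : {e ∈ Ico (max p a) (min q (b - 1) + 1) | Y (u e) ≠ Y (us e)}.Nonempty :=
    ⟨t₀, mem_filter.2 ⟨mem_Ico.2 ⟨by omega, by omega⟩, hY₀⟩⟩
  obtain ⟨hKM, hKlen⟩ := window_count_bounds hν hM ha hb hpc hcq (window_cover_le hν hnear)
  have hmid := card_mul_log_ptr_add_lt_sum_stepLogLik_sub (f := f) hptr hv hus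
    (fun e he => hvu e (mem_Ico.1 he).1 (by linarith [(mem_Ico.1 he).2]))
    (fun e he hY => (h1 e (by linarith [(mem_Ico.1 he).1, le_max_right p a])
      (by linarith [(mem_Ico.1 he).2, min_le_right q (b - 1)])).trans_le (hLl _ _ _ hY.symm)) hT
  have hleft := sum_stepLogLik_sub_left_ge (f := f) hptr hLu hO hv hus h3 hvL'
  have hright := sum_stepLogLik_sub_right_ge (f := f) hptr hLu hO hv hus hν h2 hvR'
  -- left bridge, the stretch where `v` follows `u`, right bridge
  rw [sum_Icc_stepLogLik_sub_eq_sum_Ico hwin1 hwin2 hvL hvR,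
    ← sum_Ico_consecutive' _ (show a - ν ≤ max p a by omega) (show max p a ≤ b + ν by omega),
    ← sum_Ico_consecutive' _ (show max p a ≤ min q (b - 1) + 1 by omega)
      (show min q (b - 1) + 1 ≤ b + ν by omega)]
  have hcard : ((#(Ico (max p a) (min q (b - 1) + 1)) : ℕ) : ℝ) =
      ((min q (b - 1) : ℤ) : ℝ) + 1 - ((max p a : ℤ) : ℝ) := by
    have hlr : max p a ≤ min q (b - 1) + 1 := by omega
    rw [← Int.cast_natCast, Int.card_Ico_of_le _ _ hlr, Int.cast_sub, Int.cast_add, Int.cast_one]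
  rw [hcard] at hmid
  exact window_budget_pos hρ hptr.log_nonpos hKM hKlen hleft hmid hright

theorem stmt_1_general {U O : Type*} [Zero U]
    (n N ν : ℕ) (hν : 1 ≤ ν)
    (Y : U → O) (Pt : U → U → ℝ)
    (f : O → EuclideanSpace ℝ (Fin n) → ℝ) (hf : ∀ y rr, 0 < f y rr)
    (r : ℤ → EuclideanSpace ℝ (Fin n))
    (ptr : ℝ)
    (hptr : IsLeast {t : ℝ | ∃ u1 u2 u3 u4 : U,
      0 < Pt u1 u2 ∧ 0 < Pt u3 u4 ∧ t = Pt u1 u2 / Pt u3 u4} ptr)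
    -- (i) exact-ν reachability
    (hreach : ∀ u1 u2 : U, ∃ w : ℕ → U, w 0 = u2 ∧ w ν = u1 ∧
      ∀ i < ν, 0 < Pt (w (i + 1)) (w i))
    -- (ii) ν-observability
    (hobs : ∀ u v : ℤ → U, HMMFeasible N Pt u → HMMFeasible N Pt v →
      ∀ d : ℤ, u d ≠ v d →
        ∃ mt : ℤ, d - (ν : ℤ) < mt ∧ mt < d + (ν : ℤ) ∧ Y (u mt) ≠ Y (v mt))
    -- (iii) the NLL bound functions
    (Ll Lu : EuclideanSpace ℝ (Fin n) → O → ℝ)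
    (hLl : ∀ (rr : EuclideanSpace ℝ (Fin n)) (y1 y2 : O), y2 ≠ y1 →
      Ll rr y1 ≤ Real.log (f y1 rr) - Real.log (f y2 rr))
    (hLu : ∀ (rr : EuclideanSpace ℝ (Fin n)) (y1 y2 y3 : O), y2 ≠ y3 →
      Real.log (f y3 rr) - Real.log (f y2 rr) ≤ Lu rr y1)
    (ρ : ℝ) (hρ : 0 < ρ) (M : ℤ) (hM : 1 ≤ M)
    (u : ℤ → U) (hu : HMMFeasible N Pt u)
    (m : ℤ)
    (hwin1 : 0 ≤ m - (2 * M + 1) * ν)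
    (hwin2 : m + (2 * M + 1) * ν ≤ (N : ℤ) + 1)
    (h1 : ∀ d : ℤ, m - 2 * M * ν ≤ d → d < m + 2 * M * ν →
      3 * (ν : ℝ) * (ρ - Real.log ptr) < Ll (r d) (Y (u d)))
    (h2 : ∑ d ∈ Finset.Ico (m + 2 * M * ν) (m + (2 * M + 1) * ν), Lu (r d) (Y (u d))
      ≤ 3 * (M : ℝ) * (ν : ℝ) * ρ + ((ν : ℝ) + 1) * Real.log ptr)
    (h3 : ∑ d ∈ Finset.Ico (m - (2 * M + 1) * ν) (m - 2 * M * ν), Lu (r d) (Y (u d))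
      ≤ 3 * (M : ℝ) * (ν : ℝ) * ρ + (ν : ℝ) * Real.log ptr) :
    ∀ us : ℤ → U, HMMFeasible N Pt us →
      (∀ v : ℤ → U, HMMFeasible N Pt v → HMMnSLL N Pt Y f r us ≤ HMMnSLL N Pt Y f r v) →
      us (m + ν - 1) = u (m + ν - 1) := by
  classical
  intro us hus hopt
  by_contra hne
  rw [show m + (2 * M + 1) * ν = m + 2 * M * ν + ν by ring] at h2 hwin2
  rw [show m - (2 * M + 1) * ν = m - 2 * M * ν - ν by ring] at h3 hwin1
  have hMν : (ν : ℤ) ≤ M * ν := le_mul_of_one_le_left (by positivity) hM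
  obtain ⟨p, q, hpc, hcq, hp, hq, hblock⟩ := Int.exists_maximal_Icc_of_not
    (P := fun d => u d = us d) (x := -1) (y := N)
    (by rw [hu.1 _ (.inl (by omega)), hus.1 _ (.inl (by omega))]) (Ne.symm hne)
    (by rw [hu.1 _ (.inr le_rfl), hus.1 _ (.inr le_rfl)]) (by linarith) (by linarith)
  obtain ⟨v, hv, hvu, hvL, hvL', hvR, hvR'⟩ := exists_competitor hreach hν hu hus hp hq
    (a := m - 2 * M * ν) (b := m + 2 * M * ν) (by linarith) hwin2
    (max_le (le_min (by omega) (by linarith)) (le_min (by linarith) (by linarith)))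
  have hgain := sum_stepLogLik_sub_pos hptr hLl hLu hρ hM hν hv.2 hus.2 rfl rfl hwin1 hwin2
    h1 h2 h3 hpc hcq (fun d hpd hdq => exists_mismatch_near hobs hu hus hp hq hpd hdq
      (hblock d hpd hdq)) hvu hvL hvL' hvR hvR'
  have hml := hopt v hv
  rw [HMMnSLL_eq_neg_sum_stepLogLik hf hus.2, HMMnSLL_eq_neg_sum_stepLogLik hf hv.2] at hml
  rw [sum_sub_distrib] at hgain
  linarith

/-- Theorem 3: the neighboring-log-likelihood optimality test. If the NLL bounds
hold on the window around time `m` for a feasible sequence `u`, then every ML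
sequence agrees with `u` at time `m + ν - 1`. -/
theorem stmt_1 {U O : Type*} [Fintype U] [Nonempty U] [Zero U] [Fintype O] [Nonempty O]
    (n N ν : ℕ) (hn : 1 ≤ n) (hN : 1 ≤ N) (hν : 1 ≤ ν)
    (Y : U → O) (Pt : U → U → ℝ) (hPt : ∀ u1 u2 : U, 0 ≤ Pt u1 u2)
    (f : O → EuclideanSpace ℝ (Fin n) → ℝ) (hf : ∀ y rr, 0 < f y rr)
    (r : ℤ → EuclideanSpace ℝ (Fin n))
    (ptr : ℝ)
    (hptr : IsLeast {t : ℝ | ∃ u1 u2 u3 u4 : U,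
      0 < Pt u1 u2 ∧ 0 < Pt u3 u4 ∧ t = Pt u1 u2 / Pt u3 u4} ptr)
    -- (i) exact-ν reachability
    (hreach : ∀ u1 u2 : U, ∃ w : ℕ → U, w 0 = u2 ∧ w ν = u1 ∧
      ∀ i < ν, 0 < Pt (w (i + 1)) (w i))
    -- (ii) ν-observability
    (hobs : ∀ u v : ℤ → U, HMMFeasible N Pt u → HMMFeasible N Pt v →
      ∀ d : ℤ, u d ≠ v d →
        ∃ mt : ℤ, d - (ν : ℤ) < mt ∧ mt < d + (ν : ℤ) ∧ Y (u mt) ≠ Y (v mt))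
    -- (iii) the NLL bound functions
    (Ll Lu : EuclideanSpace ℝ (Fin n) → O → ℝ)
    (hLl : ∀ (rr : EuclideanSpace ℝ (Fin n)) (y1 y2 : O), y2 ≠ y1 →
      Ll rr y1 ≤ Real.log (f y1 rr) - Real.log (f y2 rr))
    (hLu : ∀ (rr : EuclideanSpace ℝ (Fin n)) (y1 y2 y3 : O), y2 ≠ y3 →
      Real.log (f y3 rr) - Real.log (f y2 rr) ≤ Lu rr y1)
    (ρ : ℝ) (hρ : 0 < ρ) (M : ℤ) (hM : 1 ≤ M)
    (u : ℤ → U) (hu : HMMFeasible N Pt u)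
    (m : ℤ)
    (hwin1 : 0 ≤ m - (2 * M + 1) * ν)
    (hwin2 : m + (2 * M + 1) * ν ≤ (N : ℤ) + 1)
    (h1 : ∀ d : ℤ, m - 2 * M * ν ≤ d → d < m + 2 * M * ν →
      3 * (ν : ℝ) * (ρ - Real.log ptr) < Ll (r d) (Y (u d)))
    (h2 : ∑ d ∈ Finset.Ico (m + 2 * M * ν) (m + (2 * M + 1) * ν), Lu (r d) (Y (u d))
      ≤ 3 * (M : ℝ) * (ν : ℝ) * ρ + ((ν : ℝ) + 1) * Real.log ptr)
    (h3 : ∑ d ∈ Finset.Ico (m - (2 * M + 1) * ν) (m - 2 * M * ν), Lu (r d) (Y (u d))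
      ≤ 3 * (M : ℝ) * (ν : ℝ) * ρ + (ν : ℝ) * Real.log ptr) :
    ∀ us : ℤ → U, HMMFeasible N Pt us →
      (∀ v : ℤ → U, HMMFeasible N Pt v → HMMnSLL N Pt Y f r us ≤ HMMnSLL N Pt Y f r v) →
      us (m + ν - 1) = u (m + ν - 1) :=
  stmt_1_general n N ν hν Y Pt f hf r ptr hptr hreach hobs Ll Lu hLl hLu ρ hρ M hM u hu m hwin1
    hwin2 h1 h2 h3
end

section
/- Let ν ≥ 1 and n ≥ 1 be integers, let a > 0 and b ≥ 0 be reals, let ξ satisfy 0 < ξ < a, let M be an integer with M > ν·b/ξ, let p_tr ∈ (0, 1], and fix an integer m with window W = [m−(2M+1)ν, m+(2M+1)ν) ∩ ℤ. Let Ω be a measurable space, and for each s > 0 let μ_s be a probability measure on Ω and let A_d(s), B_d(s) : Ω → ℝ (d ∈ W) be measurable. Assume: for every d ∈ W and every γ < a, μ_s{ A_d(s) ≥ γ·s } → 1 as s → ∞; and for every d ∈ W and every γ > b, μ_s{ B_d(s) ≤ γ·s } → 1 as s → ∞. For each s set ρ(s) = ξ·s/(3ν) and let OPT_m(s) be the event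 that: A_d(s) > 3ν(ρ(s) − log p_tr) for all d ∈ [m−2Mν, m+2Mν); Σ_{d=m+2Mν}^{m+(2M+1)ν−1} B_d(s) ≤ 3Mνρ(s) + (ν+1)·log p_tr; and Σ_{d=m−(2M+1)ν}^{m−2Mν−1} B_d(s) ≤ 3Mνρ(s) + ν·log p_tr. Then μ_s(OPT_m(s)) → 1 as s → ∞. -/
/-!
Choose `γ₁ ∈ (ξ, a)` and `γ₂ ∈ (b, Mξ/ν)`. With probability tending to one, simultaneously for
all `d` in the (finite) window, `A_d(s) ≥ γ₁ s` and `B_d(s) ≤ γ₂ s`, because a finite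
intersection of events of probability tending to one again has probability tending to one (union
bound on the complements). On that event the three conditions of `OPT_m(s)` hold once `s` is
large: each compares a linear function of `s` with one of strictly larger slope, and the
constants involving `log p_tr` are absorbed by the gap in slopes.
-/

open Finset Filter MeasureTheory

open scoped ENNReal Topology

section ProbabilityNearOne

variable {α Ω : Type*} [MeasurableSpace Ω] {l : Filter α} {μ : α → Measure Ω}

theorem tendsto_measure_compl_nhds_zero (hμ : ∀ᶠ x in l, IsProbabilityMeasure (μ x))
    {E : α → Set Ω} (hE : ∀ x, MeasurableSet (E x))
    (h : Tendsto (fun x => μ x (E x)) l (𝓝 1)) :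
    Tendsto (fun x => μ x (E x)ᶜ) l (𝓝 0) := by
  have hsub : Tendsto (fun x => 1 - μ x (E x)) l (𝓝 (1 - 1)) :=
    ENNReal.Tendsto.sub tendsto_const_nhds h (Or.inl ENNReal.one_ne_top)
  rw [tsub_self] at hsub
  refine hsub.congr' ?_
  filter_upwards [hμ] with x hx
  rw [prob_compl_eq_one_sub (hE x)]

theorem tendsto_measure_nhds_one_of_compl_le (hμ : ∀ᶠ x in l, IsProbabilityMeasure (μ x))
    {E : α → Set Ω} {f : α → ℝ≥0∞} (hf : Tendsto f l (𝓝 0))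
    (hle : ∀ᶠ x in l, μ x (E x)ᶜ ≤ f x) :
    Tendsto (fun x => μ x (E x)) l (𝓝 1) := by
  have hlow : Tendsto (fun x => 1 - f x) l (𝓝 (1 - 0)) :=
    ENNReal.Tendsto.sub tendsto_const_nhds hf (Or.inl ENNReal.one_ne_top)
  rw [tsub_zero] at hlow
  refine tendsto_of_tendsto_of_tendsto_of_le_of_le' hlow tendsto_const_nhds ?_ ?_
  · filter_upwards [hμ, hle] with x hx hxf
    calc 1 - f x ≤ 1 - μ x (E x)ᶜ := tsub_le_tsub_left hxf 1
      _ ≤ μ x (E x) := tsub_le_iff_right.2 <| by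
          simpa using measure_univ_le_add_compl (μ := μ x) (E x)
  · filter_upwards [hμ] with x hx
    exact prob_le_one

theorem tendsto_measure_inter_nhds_one (hμ : ∀ᶠ x in l, IsProbabilityMeasure (μ x))
    {E F : α → Set Ω} (hE : ∀ x, MeasurableSet (E x)) (hF : ∀ x, MeasurableSet (F x))
    (hEl : Tendsto (fun x => μ x (E x)) l (𝓝 1)) (hFl : Tendsto (fun x => μ x (F x)) l (𝓝 1)) :
    Tendsto (fun x => μ x (E x ∩ F x)) l (𝓝 1) := by
  have hsum := (tendsto_measure_compl_nhds_zero hμ hE hEl).add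
    (tendsto_measure_compl_nhds_zero hμ hF hFl)
  rw [add_zero] at hsum
  refine tendsto_measure_nhds_one_of_compl_le hμ hsum (Eventually.of_forall fun x => ?_)
  rw [Set.compl_inter]
  exact measure_union_le _ _

theorem tendsto_measure_biInter_finset_nhds_one (hμ : ∀ᶠ x in l, IsProbabilityMeasure (μ x))
    {ι : Type*} (I : Finset ι) {E : ι → α → Set Ω} (hE : ∀ i ∈ I, ∀ x, MeasurableSet (E i x))
    (h : ∀ i ∈ I, Tendsto (fun x => μ x (E i x)) l (𝓝 1)) :
    Tendsto (fun x => μ x (⋂ i ∈ I, E i x)) l (𝓝 1) := by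
  refine tendsto_measure_nhds_one_of_compl_le hμ
    (by simpa using tendsto_finsetSum I fun i hi =>
      tendsto_measure_compl_nhds_zero hμ (hE i hi) (h i hi)) (Eventually.of_forall fun x => ?_)
  rw [Set.compl_iInter₂]
  exact measure_biUnion_finset_le _ _

theorem tendsto_measure_nhds_one_of_subset (hμ : ∀ᶠ x in l, IsProbabilityMeasure (μ x))
    {E F : α → Set Ω} (hEl : Tendsto (fun x => μ x (E x)) l (𝓝 1))
    (hEF : ∀ᶠ x in l, E x ⊆ F x) :
    Tendsto (fun x => μ x (F x)) l (𝓝 1) := by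
  refine tendsto_of_tendsto_of_tendsto_of_le_of_le' hEl tendsto_const_nhds ?_ ?_
  · filter_upwards [hEF] with x hx
    exact measure_mono hx
  · filter_upwards [hμ] with x hx
    exact prob_le_one

end ProbabilityNearOne

theorem eventually_mul_add_lt_mul_atTop {c₁ c₂ : ℝ} (h : c₁ < c₂) (C : ℝ) :
    ∀ᶠ s in atTop, c₁ * s + C < c₂ * s := by
  filter_upwards [(tendsto_id.const_mul_atTop (sub_pos.2 h)).eventually_gt_atTop C] with s hs
  simp only [id] at hs
  linarith

theorem Int.sum_Ico_le_mul {f : ℤ → ℝ} {c : ℝ} {lo hi : ℤ} {k : ℕ} (hk : hi - lo = k)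
    (h : ∀ d ∈ Ico lo hi, f d ≤ c) :
    ∑ d ∈ Ico lo hi, f d ≤ k * c := by
  simpa [hk] using Finset.sum_le_card_nsmul _ _ _ h

theorem stmt_3_general {Ω : Type*} [MeasurableSpace Ω]
    (ν : ℕ) (hν : 1 ≤ ν)
    (a b : ℝ) (hb : 0 ≤ b)
    (ξ : ℝ) (hξ1 : 0 < ξ) (hξ2 : ξ < a)
    (M : ℤ) (hM : (ν : ℝ) * b / ξ < (M : ℝ))
    (ptr : ℝ)
    (m : ℤ)
    (μ : ℝ → Measure Ω) (hμ : ∀ s : ℝ, 0 < s → IsProbabilityMeasure (μ s))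
    (A B : ℝ → ℤ → Ω → ℝ)
    (hAmeas : ∀ s d, Measurable (A s d)) (hBmeas : ∀ s d, Measurable (B s d))
    (hA : ∀ d ∈ Finset.Ico (m - (2 * M + 1) * ν) (m + (2 * M + 1) * ν),
      ∀ γ : ℝ, γ < a →
        Tendsto (fun s : ℝ => μ s {ω : Ω | γ * s ≤ A s d ω}) atTop (nhds 1))
    (hB : ∀ d ∈ Finset.Ico (m - (2 * M + 1) * ν) (m + (2 * M + 1) * ν),
      ∀ γ : ℝ, b < γ →
        Tendsto (fun s : ℝ => μ s {ω : Ω | B s d ω ≤ γ * s}) atTop (nhds 1)) :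
    Tendsto (fun s : ℝ => μ s {ω : Ω |
        (∀ d : ℤ, m - 2 * M * ν ≤ d → d < m + 2 * M * ν →
          3 * (ν : ℝ) * (ξ * s / (3 * ν) - Real.log ptr) < A s d ω) ∧
        (∑ d ∈ Finset.Ico (m + 2 * M * ν) (m + (2 * M + 1) * ν), B s d ω
          ≤ 3 * (M : ℝ) * (ν : ℝ) * (ξ * s / (3 * ν)) + ((ν : ℝ) + 1) * Real.log ptr) ∧
        (∑ d ∈ Finset.Ico (m - (2 * M + 1) * ν) (m - 2 * M * ν), B s d ω
          ≤ 3 * (M : ℝ) * (ν : ℝ) * (ξ * s / (3 * ν)) + (ν : ℝ) * Real.log ptr)})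
      atTop (nhds 1) := by
  have hμ' : ∀ᶠ s in atTop, IsProbabilityMeasure (μ s) :=
    (eventually_gt_atTop 0).mono hμ
  have hν0 : (0 : ℝ) < ν := by exact_mod_cast hν
  have hM0 : (0 : ℤ) ≤ M := by
    exact_mod_cast (lt_of_le_of_lt (show (0 : ℝ) ≤ ν * b / ξ by positivity) hM).le
  obtain ⟨γ₁, hξγ₁, hγ₁a⟩ := exists_between hξ2
  obtain ⟨γ₂, hbγ₂, hγ₂M⟩ := exists_between <| show b < M * ξ / ν by
    rw [lt_div_iff₀ hν0]; rw [div_lt_iff₀ hξ1] at hM; linarith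
  have hAm (s : ℝ) (d : ℤ) : MeasurableSet {ω | γ₁ * s ≤ A s d ω} :=
    measurableSet_le measurable_const (hAmeas s d)
  have hBm (s : ℝ) (d : ℤ) : MeasurableSet {ω | B s d ω ≤ γ₂ * s} :=
    measurableSet_le (hBmeas s d) measurable_const
  set W := Ico (m - (2 * M + 1) * ν) (m + (2 * M + 1) * ν)
  have hgood : Tendsto (fun s => μ s (⋂ d ∈ W, {ω | γ₁ * s ≤ A s d ω} ∩ {ω | B s d ω ≤ γ₂ * s}))
      atTop (𝓝 1) :=
    tendsto_measure_biInter_finset_nhds_one hμ' W (fun d _ s => (hAm s d).inter (hBm s d))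
      fun d hd => tendsto_measure_inter_nhds_one hμ' (hAm · d) (hBm · d)
        (hA d hd γ₁ hγ₁a) (hB d hd γ₂ hbγ₂)
  refine tendsto_measure_nhds_one_of_subset hμ' hgood ?_
  have hγ₂ν : ν * γ₂ < M * ξ := by rwa [lt_div_iff₀' hν0] at hγ₂M
  filter_upwards [eventually_mul_add_lt_mul_atTop hξγ₁ (-(3 * ν * Real.log ptr)),
    eventually_mul_add_lt_mul_atTop hγ₂ν (-((ν + 1) * Real.log ptr)),
    eventually_mul_add_lt_mul_atTop hγ₂ν (-(ν * Real.log ptr))] with s h₁ h₂ h₃ ω hω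
  simp only [Set.mem_iInter₂, Set.mem_inter_iff, Set.mem_ofPred_eq, W, mem_Ico] at hω
  have hρ : 3 * (ν : ℝ) * (ξ * s / (3 * ν)) = ξ * s := by field_simp
  have hMρ : 3 * (M : ℝ) * ν * (ξ * s / (3 * ν)) = M * ξ * s := by field_simp
  refine ⟨fun d hd₁ hd₂ => ?_, ?_, ?_⟩
  · have := (hω d ⟨by nlinarith, by nlinarith⟩).1
    rw [mul_sub, hρ]
    linarith
  all_goals
    rw [hMρ]
    refine (Int.sum_Ico_le_mul (k := ν) (by ring) fun d hd => (hω d ?_).2).trans (by linarith)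
    rw [mem_Ico] at hd
    constructor <;> nlinarith

/-- Lemma 4 (Proposition 4) in explicit form: if the NLL lower bounds `A_d(s)`
exceed `γ·s` (for any `γ < a`) and the upper bounds `B_d(s)` fall below `γ·s`
(for any `γ > b`) with probability tending to one as `s → ∞`, then with
`ρ(s) = ξ·s/(3ν)` the hypotheses of Theorem 3 at time `m` hold with probability
tending to one as `s → ∞`. -/
theorem stmt_3 {Ω : Type*} [MeasurableSpace Ω]
    (ν : ℕ) (hν : 1 ≤ ν) (n : ℕ) (hn : 1 ≤ n)
    (a b : ℝ) (ha : 0 < a) (hb : 0 ≤ b)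
    (ξ : ℝ) (hξ1 : 0 < ξ) (hξ2 : ξ < a)
    (M : ℤ) (hM : (ν : ℝ) * b / ξ < (M : ℝ))
    (ptr : ℝ) (hptr1 : 0 < ptr) (hptr2 : ptr ≤ 1)
    (m : ℤ)
    (μ : ℝ → Measure Ω) (hμ : ∀ s : ℝ, 0 < s → IsProbabilityMeasure (μ s))
    (A B : ℝ → ℤ → Ω → ℝ)
    (hAmeas : ∀ s d, Measurable (A s d)) (hBmeas : ∀ s d, Measurable (B s d))
    (hA : ∀ d ∈ Finset.Ico (m - (2 * M + 1) * ν) (m + (2 * M + 1) * ν),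
      ∀ γ : ℝ, γ < a →
        Tendsto (fun s : ℝ => μ s {ω : Ω | γ * s ≤ A s d ω}) atTop (nhds 1))
    (hB : ∀ d ∈ Finset.Ico (m - (2 * M + 1) * ν) (m + (2 * M + 1) * ν),
      ∀ γ : ℝ, b < γ →
        Tendsto (fun s : ℝ => μ s {ω : Ω | B s d ω ≤ γ * s}) atTop (nhds 1)) :
    Tendsto (fun s : ℝ => μ s {ω : Ω |
        (∀ d : ℤ, m - 2 * M * ν ≤ d → d < m + 2 * M * ν →
          3 * (ν : ℝ) * (ξ * s / (3 * ν) - Real.log ptr) < A s d ω) ∧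
        (∑ d ∈ Finset.Ico (m + 2 * M * ν) (m + (2 * M + 1) * ν), B s d ω
          ≤ 3 * (M : ℝ) * (ν : ℝ) * (ξ * s / (3 * ν)) + ((ν : ℝ) + 1) * Real.log ptr) ∧
        (∑ d ∈ Finset.Ico (m - (2 * M + 1) * ν) (m - 2 * M * ν), B s d ω
          ≤ 3 * (M : ℝ) * (ν : ℝ) * (ξ * s / (3 * ν)) + (ν : ℝ) * Real.log ptr)})
      atTop (nhds 1) :=
  stmt_3_general ν hν a b hb ξ hξ1 hξ2 M hM ptr m μ hμ A B hAmeas hBmeas hA hB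
end

section
/- Let u and ũ be feasible state sequences and let d₁ < d₂ be integers with 0 ≤ d₁ and d₂ ≤ N such that u[d₁] = ũ[d₁], u[d₂] = ũ[d₂], and Σ_{d=d₁+1}^{d₂} [ log( f(Y(ũ[d]), r[d]) · P_t(ũ[d]|ũ[d−1]) ) − log( f(Y(u[d]), r[d]) · P_t(u[d]|u[d−1]) ) ] < 0. Then ũ is not an ML sequence; in fact, the sequence u' defined by u'[d] = u[d] for d₁ < d ≤ d₂ and u'[d] = ũ[d] otherwise is feasible and satisfies S(u') < S(ũ). -/
open Finset

/-- The Path Covering Criterion (Appendix A): if the feasible sequence `u`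
covers the feasible sequence `v` between the agreeing times `d₁ < d₂` (the log
likelihood ratio over `(d₁, d₂]` is negative), then the spliced sequence `u'`
(equal to `u` on `(d₁, d₂]` and to `v` elsewhere) is feasible and beats `v`, so
`v` is not an ML sequence. -/
theorem stmt_4 {U O : Type*} [Fintype U] [Nonempty U] [Zero U] [Fintype O] [Nonempty O]
    (n N ν : ℕ) (hn : 1 ≤ n) (hN : 1 ≤ N) (hν : 1 ≤ ν)
    (Y : U → O) (Pt : U → U → ℝ) (hPt : ∀ u1 u2 : U, 0 ≤ Pt u1 u2)
    (f : O → EuclideanSpace ℝ (Fin n) → ℝ) (hf : ∀ y rr, 0 < f y rr)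
    (r : ℤ → EuclideanSpace ℝ (Fin n))
    (u v : ℤ → U) (hu : HMMFeasible N Pt u) (hv : HMMFeasible N Pt v)
    (d₁ d₂ : ℤ) (hd : d₁ < d₂) (hd₁ : 0 ≤ d₁) (hd₂ : d₂ ≤ (N : ℤ))
    (heq₁ : u d₁ = v d₁) (heq₂ : u d₂ = v d₂)
    (hcov : ∑ d ∈ Finset.Ioc d₁ d₂,
        (Real.log (f (Y (v d)) (r d) * Pt (v d) (v (d - 1)))
          - Real.log (f (Y (u d)) (r d) * Pt (u d) (u (d - 1)))) < 0) :
    HMMFeasible N Pt (fun d => if d₁ < d ∧ d ≤ d₂ then u d else v d) ∧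
    HMMnSLL N Pt Y f r (fun d => if d₁ < d ∧ d ≤ d₂ then u d else v d)
      < HMMnSLL N Pt Y f r v ∧
    ¬ (∀ z : ℤ → U, HMMFeasible N Pt z → HMMnSLL N Pt Y f r v ≤ HMMnSLL N Pt Y f r z) := by
  set u' : ℤ → U := fun d => if d₁ < d ∧ d ≤ d₂ then u d else v d with hu'
  have e1 : ∀ e : ℤ, d₁ < e ∧ e ≤ d₂ → u' e = u e := fun e he => if_pos he
  have e2 : ∀ e : ℤ, ¬(d₁ < e ∧ e ≤ d₂) → u' e = v e := fun e he => if_neg he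
  have hfeas : HMMFeasible N Pt u' := by
    constructor
    · intro d hdr
      by_cases h : d₁ < d ∧ d ≤ d₂
      · rw [e1 d h]; exact hu.1 d hdr
      · rw [e2 d h]; exact hv.1 d hdr
    · intro d
      by_cases h : d₁ < d ∧ d ≤ d₂
      · by_cases h' : d₁ < d - 1 ∧ d - 1 ≤ d₂
        · rw [e1 d h, e1 _ h']; exact hu.2 d
        · have hdm : d - 1 = d₁ := by omega
          have hveq : v (d - 1) = u (d - 1) := by rw [hdm, ← heq₁]
          rw [e1 d h, e2 _ h', hveq]; exact hu.2 d
      · by_cases h' : d₁ < d - 1 ∧ d - 1 ≤ d₂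
        · have hdm : d - 1 = d₂ := by omega
          have hueq : u (d - 1) = v (d - 1) := by rw [hdm, heq₂]
          rw [e2 d h, e1 _ h', hueq]; exact hv.2 d
        · rw [e2 d h, e2 _ h']; exact hv.2 d
  have hsub : Finset.Ioc d₁ d₂ ⊆ Finset.Icc (0 : ℤ) (N : ℤ) := by
    intro d hdm
    simp only [Finset.mem_Ioc] at hdm
    simp only [Finset.mem_Icc]
    omega
  set L : (ℤ → U) → ℤ → ℝ := fun w d => Real.log (f (Y (w d)) (r d) * Pt (w d) (w (d - 1))) with hL
  have hterm : ∀ d : ℤ, L u' d - L v d = if d ∈ Finset.Ioc d₁ d₂ then L u d - L v d else 0 := by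
    intro d
    have hmem : (d ∈ Finset.Ioc d₁ d₂) ↔ (d₁ < d ∧ d ≤ d₂) := Finset.mem_Ioc
    by_cases h : d₁ < d ∧ d ≤ d₂
    · rw [if_pos (hmem.mpr h)]
      by_cases h' : d₁ < d - 1 ∧ d - 1 ≤ d₂
      · simp only [hL]; rw [e1 d h, e1 _ h']
      · have hdm : d - 1 = d₁ := by omega
        have hveq : v (d - 1) = u (d - 1) := by rw [hdm, ← heq₁]
        simp only [hL]; rw [e1 d h, e2 _ h', hveq]
    · rw [if_neg (fun hc => h (hmem.mp hc))]
      by_cases h' : d₁ < d - 1 ∧ d - 1 ≤ d₂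
      · have hdm : d - 1 = d₂ := by omega
        have hueq : u (d - 1) = v (d - 1) := by rw [hdm, heq₂]
        simp only [hL]; rw [e2 d h, e1 _ h', hueq]; ring
      · simp only [hL]; rw [e2 d h, e2 _ h']; ring
  have hlt : HMMnSLL N Pt Y f r u' < HMMnSLL N Pt Y f r v := by
    have hdiff : HMMnSLL N Pt Y f r u' - HMMnSLL N Pt Y f r v
        = ∑ d ∈ Finset.Ioc d₁ d₂, (L v d - L u d) := by
      have h1 : HMMnSLL N Pt Y f r u' - HMMnSLL N Pt Y f r v
          = - ∑ d ∈ Finset.Icc (0 : ℤ) (N : ℤ), (L u' d - L v d) := by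
        simp only [HMMnSLL, Finset.sum_sub_distrib, hL]
        ring
      rw [h1]
      have h2 : ∑ d ∈ Finset.Icc (0 : ℤ) (N : ℤ), (L u' d - L v d)
          = ∑ d ∈ Finset.Ioc d₁ d₂, (L u d - L v d) := by
        rw [Finset.sum_congr rfl (fun d _ => hterm d)]
        rw [Finset.sum_ite_mem, Finset.inter_eq_right.mpr hsub]
      rw [h2, ← Finset.sum_neg_distrib]
      exact Finset.sum_congr rfl (fun d _ => by ring)
    have : HMMnSLL N Pt Y f r u' - HMMnSLL N Pt Y f r v < 0 := by
      rw [hdiff]; exact hcov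
    linarith
  refine ⟨hfeas, hlt, fun hml => ?_⟩
  exact absurd (hml u' hfeas) (not_le.mpr hlt)
end

section
/- Assume k ≥ 1 and that the matrix G[0] has full row rank k over GF(q). Then for every message x with codeword y there exists a message x̃ ≠ x with codeword ỹ such that ỹ ≠ y and the set { d ∈ ℤ : ỹ[d] ≠ y[d] } has at most ν elements. -/
open Finset

/-!
Perturb the message at time `0` by a nonzero `e`, i.e. add the impulse `Pi.single 0 e`.
By linearity the codeword changes by the impulse response of the encoder, which vanishes
outside the window `[0, ν)`, and at time `0` equals `e ⬝ G[0]`, nonzero because the rows of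
`G[0]` are linearly independent.
-/

theorem Matrix.linearIndependent_row_of_rank_eq_card {R m n : Type*} [Field R] [Fintype m]
    [Fintype n] {M : Matrix m n R} (h : M.rank = Fintype.card m) :
    LinearIndependent R M.row := by
  rw [M.rank_eq_finrank_span_row] at h
  rw [linearIndependent_iff_card_eq_finrank_span, Set.finrank, h]

theorem IsMsg.add {K : Type*} [AddZeroClass K] {k N : ℕ} {x x' : ℤ → Fin k → K}
    (hx : IsMsg k N x) (hx' : IsMsg k N x') : IsMsg k N (x + x') := fun d hd => by
  simp [hx d hd, hx' d hd]

theorem isMsg_single {K : Type*} [Zero K] {k N : ℕ} {t : ℤ} (ht₀ : 0 ≤ t) (htN : t < N)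
    (e : Fin k → K) : IsMsg k N (Pi.single t e) := fun d hd =>
  Pi.single_eq_of_ne (M := fun _ => Fin k → K) (show d ≠ t by omega) e

section Codeword

variable {K : Type*} [Field K] {k n ν : ℕ} (G : ℕ → Matrix (Fin k) (Fin n) K)

theorem cw_add (x x' : ℤ → Fin k → K) :
    cw k n ν G (x + x') = cw k n ν G x + cw k n ν G x' := by
  funext d
  simp only [cw, Pi.add_apply, Matrix.add_vecMul, Finset.sum_add_distrib]

theorem setOf_cw_add_ne_eq_support (x x' : ℤ → Fin k → K) :
    {d | cw k n ν G (x + x') d ≠ cw k n ν G x d} = Function.support (cw k n ν G x') := by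
  ext d
  simp [cw_add]

theorem cw_single_self (hν : 0 < ν) (t : ℤ) (e : Fin k → K) :
    cw k n ν G (Pi.single t e) t = Matrix.vecMul e (G 0) := by
  rw [cw, Finset.sum_eq_single_of_mem 0 (mem_range.2 hν)]
  · simp
  · intro l _ hl
    rw [Pi.single_eq_of_ne (by omega), Matrix.zero_vecMul]

theorem support_cw_single_subset (t : ℤ) (e : Fin k → K) :
    Function.support (cw k n ν G (Pi.single t e)) ⊆ Set.Ico t (t + ν) := by
  refine Function.support_subset_iff'.2 fun d hd => Finset.sum_eq_zero fun l hl => ?_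
  have hdl : d - l ≠ t := by
    simp only [Set.mem_Ico, not_and_or, not_le, not_lt] at hd
    simp only [mem_range] at hl
    omega
  rw [Pi.single_eq_of_ne hdl, Matrix.zero_vecMul]

theorem support_cw_single_finite (t : ℤ) (e : Fin k → K) :
    (Function.support (cw k n ν G (Pi.single t e))).Finite :=
  (Set.finite_Ico _ _).subset (support_cw_single_subset G t e)

theorem ncard_support_cw_single_le (t : ℤ) (e : Fin k → K) :
    (Function.support (cw k n ν G (Pi.single t e))).ncard ≤ ν :=
  calc (Function.support (cw k n ν G (Pi.single t e))).ncard
      ≤ (Set.Ico t (t + ν)).ncard :=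
        Set.ncard_le_ncard (support_cw_single_subset G t e) (Set.finite_Ico _ _)
    _ = ν := by
        rw [← Finset.coe_Ico, Set.ncard_coe_finset, Int.card_Ico, add_sub_cancel_left,
          Int.toNat_natCast]

end Codeword

theorem stmt_5_general {K : Type*} [Field K]
    (k n ν N : ℕ) (hk : 1 ≤ k) (hν : 1 ≤ ν) (hN : 1 ≤ N)
    (G : ℕ → Matrix (Fin k) (Fin n) K)
    (hG0 : (G 0).rank = k) :
    ∀ x : ℤ → Fin k → K, IsMsg k N x →
      ∃ xt : ℤ → Fin k → K, IsMsg k N xt ∧ xt ≠ x ∧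
        cw k n ν G xt ≠ cw k n ν G x ∧
        {d : ℤ | cw k n ν G xt d ≠ cw k n ν G x d}.Finite ∧
        {d : ℤ | cw k n ν G xt d ≠ cw k n ν G x d}.ncard ≤ ν := by
  intro x hx
  have : Nonempty (Fin k) := ⟨⟨0, hk⟩⟩
  obtain ⟨e, he⟩ := exists_ne (0 : Fin k → K)
  have hG0_inj : Function.Injective fun v => Matrix.vecMul v (G 0) :=
    Matrix.vecMul_injective_iff.2 <|
      Matrix.linearIndependent_row_of_rank_eq_card (by rwa [Fintype.card_fin])
  have hresponse : cw k n ν G (Pi.single 0 e) 0 ≠ 0 := by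
    rw [cw_single_self G hν]
    simpa using hG0_inj.ne he
  refine ⟨x + Pi.single 0 e, hx.add (isMsg_single le_rfl (by omega) e), ?_, ?_, ?_, ?_⟩
  · simpa using he
  · rw [cw_add, Ne, add_eq_left]
    exact fun h => hresponse (congrFun h 0)
  · rw [setOf_cw_add_ne_eq_support]
    exact support_cw_single_finite G 0 e
  · rw [setOf_cw_add_ne_eq_support]
    exact ncard_support_cw_single_le G 0 e

/-- Appendix B claim: if `G[0]` has full row rank, then for every message `x`
with codeword `y` there is a different message `x̃` whose codeword `ỹ` differs
from `y` in at most `ν` time indices (and `ỹ ≠ y`). -/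
theorem stmt_5 {K : Type*} [Field K] [Fintype K] [DecidableEq K]
    (k n ν N : ℕ) (hk : 1 ≤ k) (hn : 1 ≤ n) (hν : 1 ≤ ν) (hN : 1 ≤ N)
    (G : ℕ → Matrix (Fin k) (Fin n) K)
    (hG0 : (G 0).rank = k) :
    ∀ x : ℤ → Fin k → K, IsMsg k N x →
      ∃ xt : ℤ → Fin k → K, IsMsg k N xt ∧ xt ≠ x ∧
        cw k n ν G xt ≠ cw k n ν G x ∧
        {d : ℤ | cw k n ν G xt d ≠ cw k n ν G x d}.Finite ∧
        {d : ℤ | cw k n ν G xt d ≠ cw k n ν G x d}.ncard ≤ ν :=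
  stmt_5_general k n ν N hk hν hN G hG0
end

section
/- Let ν ≥ 1 and K ≥ 1 be integers, t₀ ∈ ℤ, S a type, and F, G : ℤ → S. Suppose that for every k ∈ {0, 1, …, K−1} there exists an integer d with t₀ + kν − ν < d < t₀ + kν + ν and F(d) ≠ G(d). Then the set { d ∈ ℤ : t₀ − ν < d < t₀ + (K−1)ν + ν and F(d) ≠ G(d) } has at least ⌈K/2⌉ elements. -/
/-! Each index lies within distance `< ν` of at most two consecutive points `t₀ + kν` of the
progression, so the chosen witnesses for the even-numbered points `t₀ + 2jν`, `0 ≤ 2j < K`,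
are pairwise distinct; there are `⌈K/2⌉` of them. -/

lemma le_add_one_of_windows_meet {ν t₀ k k' a : ℤ} (hν : 0 < ν)
    (hk : t₀ + k * ν - ν < a) (hk' : a < t₀ + k' * ν + ν) : k ≤ k' + 1 := by
  by_contra! hlt
  nlinarith

lemma div_two_le_ncard_of_near_progression {ν t₀ K : ℤ} (hν : 0 < ν) {A : Set ℤ}
    (hA : A.Finite) (g : ℤ → ℤ)
    (hg : ∀ k, 0 ≤ k → k < K → g k ∈ A ∧ t₀ + k * ν - ν < g k ∧ g k < t₀ + k * ν + ν) :
    (K + 1) / 2 ≤ (A.ncard : ℤ) := by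
  have hmaps : ∀ j ∈ Set.Ico 0 ((K + 1) / 2), g (2 * j) ∈ A := fun j ⟨hj0, hj⟩ =>
    (hg (2 * j) (by omega) (by omega)).1
  have hinj : Set.InjOn (fun j => g (2 * j)) (Set.Ico 0 ((K + 1) / 2)) := by
    intro j ⟨hj0, hj⟩ j' ⟨hj0', hj'⟩ hjj'
    obtain ⟨-, hlo, hhi⟩ := hg (2 * j) (by omega) (by omega)
    obtain ⟨-, hlo', hhi'⟩ := hg (2 * j') (by omega) (by omega)
    simp only at hjj'
    rw [hjj'] at hlo hhi
    have := le_add_one_of_windows_meet hν hlo hhi'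
    have := le_add_one_of_windows_meet hν hlo' hhi
    omega
  have hcard := Set.ncard_le_ncard_of_injOn _ hmaps hinj hA
  rw [← Finset.coe_Ico, Set.ncard_coe_finset, Int.card_Ico] at hcard
  omega

theorem stmt_9_general {S : Type*} (ν K t₀ : ℤ) (hν : 1 ≤ ν)
    (F G : ℤ → S)
    (h : ∀ k : ℤ, 0 ≤ k → k < K →
      ∃ d : ℤ, t₀ + k * ν - ν < d ∧ d < t₀ + k * ν + ν ∧ F d ≠ G d) :
    (K + 1) / 2 ≤
      ({d : ℤ | t₀ - ν < d ∧ d < t₀ + (K - 1) * ν + ν ∧ F d ≠ G d}.ncard : ℤ) := by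
  have h' : ∀ k, ∃ d, 0 ≤ k → k < K →
      t₀ + k * ν - ν < d ∧ d < t₀ + k * ν + ν ∧ F d ≠ G d := fun k =>
    if hk : 0 ≤ k ∧ k < K then (h k hk.1 hk.2).imp fun _ hd _ _ => hd
    else ⟨0, fun h0 hK => absurd ⟨h0, hK⟩ hk⟩
  choose g hg using h'
  refine div_two_le_ncard_of_near_progression (ν := ν) (t₀ := t₀) (by omega)
    ((Set.finite_Ioo (t₀ - ν) (t₀ + (K - 1) * ν + ν)).subset fun d hd => ⟨hd.1, hd.2.1⟩) g ?_
  intro k hk0 hkK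
  obtain ⟨hlo, hhi, hne⟩ := hg k hk0 hkK
  exact ⟨⟨by nlinarith, by nlinarith, hne⟩, hlo, hhi⟩

/-- Counting argument from the proof of Theorem 3: if for each `k ∈ {0, …, K-1}`
the functions `F` and `G` differ at some index within distance `< ν` of `t₀ + kν`,
then `F` and `G` differ at at least `⌈K/2⌉` indices of the interval
`(t₀ - ν, t₀ + (K-1)ν + ν)`. -/
theorem stmt_9 {S : Type*} (ν K t₀ : ℤ) (hν : 1 ≤ ν) (hK : 1 ≤ K)
    (F G : ℤ → S)
    (h : ∀ k : ℤ, 0 ≤ k → k < K →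
      ∃ d : ℤ, t₀ + k * ν - ν < d ∧ d < t₀ + k * ν + ν ∧ F d ≠ G d) :
    (K + 1) / 2 ≤
      ({d : ℤ | t₀ - ν < d ∧ d < t₀ + (K - 1) * ν + ν ∧ F d ≠ G d}.ncard : ℤ) :=
  stmt_9_general ν K t₀ hν F G h
end

section
/- Let U be a nonempty finite type, R : U → U → Prop a transition relation, and ν ≥ 1 an integer. Assume exact-ν reachability: for all u₁, u₂ ∈ U there exist states w₀ = u₂, w₁, …, w_ν = u₁ with R(w_i, w_{i+1}) for 0 ≤ i < ν. Let u, ũ : ℤ → U be two sequences with R(u[d−1], u[d]) and R(ũ[d−1], ũ[d]) for all d ∈ ℤ. Then for every T ∈ ℤ there exists a sequence u_c : ℤ → U with R(u_c[d−1], u_c[d]) for all d ∈ ℤ, u_c[d] = u[d] for all d < T, and u_c[d] = ũ[d] for all d ≥ T + ν. -/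
/-- Splicing construction from the proof of Theorem 3: under exact-`ν`
reachability of the transition relation `R`, given two bi-infinite `R`-feasible
sequences `u` and `v` and any time `T`, there is an `R`-feasible sequence `uc`
following `u` before time `T` and following `v` from time `T + ν` onward. -/
theorem stmt_10 {U : Type*} [Fintype U] [Nonempty U]
    (R : U → U → Prop) (ν : ℕ) (hν : 1 ≤ ν)
    (hreach : ∀ u₁ u₂ : U, ∃ w : ℕ → U, w 0 = u₂ ∧ w ν = u₁ ∧
      ∀ i < ν, R (w i) (w (i + 1)))
    (u v : ℤ → U) (hu : ∀ d : ℤ, R (u (d - 1)) (u d))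
    (hv : ∀ d : ℤ, R (v (d - 1)) (v d)) :
    ∀ T : ℤ, ∃ uc : ℤ → U, (∀ d : ℤ, R (uc (d - 1)) (uc d)) ∧
      (∀ d : ℤ, d < T → uc d = u d) ∧ (∀ d : ℤ, T + (ν : ℤ) ≤ d → uc d = v d) := by
  intro T
  obtain ⟨w, hw0, hwn, hws⟩ := hreach (v (T + (ν : ℤ) - 1)) (u (T - 1))
  refine ⟨fun d => if d < T then u d else if d < T + (ν : ℤ) then
      w (d - (T - 1)).toNat else v d, ?_, ?_, ?_⟩
  · intro d
    by_cases h1 : d < T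
    · have h0 : d - 1 < T := by omega
      simp only [h1, h0, if_pos]
      exact hu d
    · by_cases h2 : d < T + (ν : ℤ)
      · by_cases h3 : d - 1 < T
        · have hdT : d = T := by omega
          have e : (d - (T - 1)).toNat = 1 := by omega
          simp only [h1, h2, h3, if_pos, if_neg, if_true, if_false, e]
          have : u (d - 1) = w 0 := by rw [hw0, hdT]
          rw [this]
          exact hws 0 (by omega)
        · have h4 : d - 1 < T + (ν : ℤ) := by omega
          simp only [h1, h2, h3, h4, if_pos, if_neg, if_true, if_false]
          have e : (d - (T - 1)).toNat = (d - 1 - (T - 1)).toNat + 1 := by omega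
          rw [e]
          exact hws _ (by omega)
      · by_cases h3 : d - 1 < T + (ν : ℤ)
        · have h4 : ¬ d - 1 < T := by omega
          simp only [h1, h2, h3, h4, if_pos, if_neg, if_true, if_false]
          have e : (d - 1 - (T - 1)).toNat = ν := by omega
          rw [e, hwn]
          have : T + (ν : ℤ) - 1 = d - 1 := by omega
          rw [this]
          exact hv d
        · have h4 : ¬ d - 1 < T := by omega
          simp only [h1, h2, h3, h4, if_neg]
          exact hv d
  · intro d hd
    simp [hd]
  · intro d hd
    have h1 : ¬ d < T := by omega
    have h2 : ¬ d < T + (ν : ℤ) := by omega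
    simp [h1, h2]
end

section
/- Assume there is a function L_l : ℝ^n × O → ℝ such that L_l(r̂, y₁) ≤ log f(y₁, r̂) − log f(y₂, r̂) for all r̂ ∈ ℝ^n and all y₁ ≠ y₂ in O. Let u and ũ be feasible state sequences and let a ≤ b be integers. Then −Σ_{d=a}^{b} log[ ( f(Y(ũ[d]), r[d]) · P_t(ũ[d]|ũ[d−1]) ) / ( f(Y(u[d]), r[d]) · P_t(u[d]|u[d−1]) ) ] ≥ Σ_{d ∈ [a,b], Y(u[d]) ≠ Y(ũ[d])} L_l(r[d], Y(u[d])) + (b − a + 1)·log p_tr. -/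
open Finset

/-- The lower-bounding inequality of the proof of Theorem 3: over the interval
`[a, b]`, the negative log likelihood ratio of a competing feasible path `v`
against the reference feasible path `u` is at least the sum of the
neighboring-log-likelihood lower bounds `Ll` at the indices where the processed
states differ, plus `(b - a + 1) · log p_tr`. -/
theorem stmt_11 {U O : Type*} [Fintype U] [Nonempty U] [Zero U]
    [Fintype O] [Nonempty O] [DecidableEq O]
    (n N ν : ℕ) (hn : 1 ≤ n) (hN : 1 ≤ N) (hν : 1 ≤ ν)
    (Y : U → O) (Pt : U → U → ℝ) (hPt : ∀ u1 u2 : U, 0 ≤ Pt u1 u2)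
    (f : O → EuclideanSpace ℝ (Fin n) → ℝ) (hf : ∀ y rr, 0 < f y rr)
    (r : ℤ → EuclideanSpace ℝ (Fin n))
    (ptr : ℝ)
    (hptr : IsLeast {t : ℝ | ∃ u1 u2 u3 u4 : U,
      0 < Pt u1 u2 ∧ 0 < Pt u3 u4 ∧ t = Pt u1 u2 / Pt u3 u4} ptr)
    (Ll : EuclideanSpace ℝ (Fin n) → O → ℝ)
    (hLl : ∀ (rr : EuclideanSpace ℝ (Fin n)) (y1 y2 : O), y1 ≠ y2 →
      Ll rr y1 ≤ Real.log (f y1 rr) - Real.log (f y2 rr))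
    (u v : ℤ → U) (hu : HMMFeasible N Pt u) (hv : HMMFeasible N Pt v)
    (a b : ℤ) (hab : a ≤ b) :
    - ∑ d ∈ Finset.Icc a b,
        Real.log ((f (Y (v d)) (r d) * Pt (v d) (v (d - 1)))
          / (f (Y (u d)) (r d) * Pt (u d) (u (d - 1))))
      ≥ (∑ d ∈ (Finset.Icc a b).filter (fun d => Y (u d) ≠ Y (v d)),
            Ll (r d) (Y (u d)))
        + ((b - a + 1 : ℤ) : ℝ) * Real.log ptr := by

  obtain ⟨⟨u1, u2, u3, u4, h12, h34, hptreq⟩, hlb⟩ := hptr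
  have hptrpos : 0 < ptr := by rw [hptreq]; positivity
  have key : ∀ d ∈ Finset.Icc a b,
      (if Y (u d) ≠ Y (v d) then Ll (r d) (Y (u d)) else 0) + Real.log ptr
      ≤ - Real.log ((f (Y (v d)) (r d) * Pt (v d) (v (d - 1)))
          / (f (Y (u d)) (r d) * Pt (u d) (u (d - 1)))) := by
    intro d _
    have hPu := hu.2 d
    have hPv := hv.2 d
    have hfu := hf (Y (u d)) (r d)
    have hfv := hf (Y (v d)) (r d)
    rw [Real.log_div (by positivity) (by positivity),
        Real.log_mul (ne_of_gt hfv) (ne_of_gt hPv),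
        Real.log_mul (ne_of_gt hfu) (ne_of_gt hPu)]
    have h1 : Real.log ptr ≤ Real.log (Pt (u d) (u (d - 1))) - Real.log (Pt (v d) (v (d - 1))) := by
      rw [← Real.log_div (ne_of_gt hPu) (ne_of_gt hPv)]
      exact Real.log_le_log hptrpos (hlb ⟨_, _, _, _, hPu, hPv, rfl⟩)
    by_cases h : Y (u d) ≠ Y (v d)
    · have h2 := hLl (r d) _ _ h
      rw [if_pos h]
      linarith
    · push_neg at h
      simp only [h, ne_eq, not_true_eq_false, if_false]
      linarith
  have hcard : (((Finset.Icc a b).card : ℤ) : ℝ) = ((b - a + 1 : ℤ) : ℝ) := by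
    congr 1
    rw [Int.card_Icc]
    omega
  rw [ge_iff_le]
  calc (∑ d ∈ (Finset.Icc a b).filter (fun d => Y (u d) ≠ Y (v d)), Ll (r d) (Y (u d)))
        + ((b - a + 1 : ℤ) : ℝ) * Real.log ptr
      = ∑ d ∈ Finset.Icc a b,
          ((if Y (u d) ≠ Y (v d) then Ll (r d) (Y (u d)) else 0) + Real.log ptr) := by
        rw [Finset.sum_add_distrib, Finset.sum_filter, Finset.sum_const, nsmul_eq_mul, ← hcard]
        push_cast
        ring
    _ ≤ ∑ d ∈ Finset.Icc a b, -(Real.log ((f (Y (v d)) (r d) * Pt (v d) (v (d - 1)))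
          / (f (Y (u d)) (r d) * Pt (u d) (u (d - 1))))) := Finset.sum_le_sum key
    _ = - ∑ d ∈ Finset.Icc a b, Real.log ((f (Y (v d)) (r d) * Pt (v d) (v (d - 1)))
          / (f (Y (u d)) (r d) * Pt (u d) (u (d - 1)))) := by
        rw [Finset.sum_neg_distrib]
end

section
/- Assume O has at least two elements and there is a function L_u : ℝ^n × O → ℝ such that L_u(r̂, y₁) ≥ log f(y₃, r̂) − log f(y₂, r̂) for all r̂ ∈ ℝ^n, all y₁ ∈ O, and all y₂ ≠ y₃ in O. Let u and ũ be feasible state sequences and let a ≤ b be integers. Then −Σ_{d=a}^{b} log[ ( f(Y(ũ[d]), r[d]) · P_t(ũ[d]|ũ[d−1]) ) / ( f(Y(u[d]), r[d]) · P_t(u[d]|u[d−1]) ) ] ≥ −Σ_{d=a}^{b} L_u(r[d], Y(u[d])) + (b − a + 1)·log p_tr. -/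
open Finset

/-- The upper-bounding inequality of the proof of Theorem 3: over the interval
`[a, b]`, the negative log likelihood ratio of a competing feasible path `v`
against the reference feasible path `u` is at least minus the sum of the
neighboring-log-likelihood upper bounds `Lu` along `u`, plus
`(b - a + 1) · log p_tr`. -/
theorem stmt_12 {U O : Type*} [Fintype U] [Nonempty U] [Zero U]
    [Fintype O] [Nontrivial O]
    (n N ν : ℕ) (hn : 1 ≤ n) (hN : 1 ≤ N) (hν : 1 ≤ ν)
    (Y : U → O) (Pt : U → U → ℝ) (hPt : ∀ u1 u2 : U, 0 ≤ Pt u1 u2)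
    (f : O → EuclideanSpace ℝ (Fin n) → ℝ) (hf : ∀ y rr, 0 < f y rr)
    (r : ℤ → EuclideanSpace ℝ (Fin n))
    (ptr : ℝ)
    (hptr : IsLeast {t : ℝ | ∃ u1 u2 u3 u4 : U,
      0 < Pt u1 u2 ∧ 0 < Pt u3 u4 ∧ t = Pt u1 u2 / Pt u3 u4} ptr)
    (Lu : EuclideanSpace ℝ (Fin n) → O → ℝ)
    (hLu : ∀ (rr : EuclideanSpace ℝ (Fin n)) (y1 y2 y3 : O), y2 ≠ y3 →
      Real.log (f y3 rr) - Real.log (f y2 rr) ≤ Lu rr y1)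
    (u v : ℤ → U) (hu : HMMFeasible N Pt u) (hv : HMMFeasible N Pt v)
    (a b : ℤ) (hab : a ≤ b) :
    - ∑ d ∈ Finset.Icc a b,
        Real.log ((f (Y (v d)) (r d) * Pt (v d) (v (d - 1)))
          / (f (Y (u d)) (r d) * Pt (u d) (u (d - 1))))
      ≥ - (∑ d ∈ Finset.Icc a b, Lu (r d) (Y (u d)))
        + ((b - a + 1 : ℤ) : ℝ) * Real.log ptr := by
  obtain ⟨hmem, hlb⟩ := hptr
  obtain ⟨w1, w2, w3, w4, hw1, hw2, heq⟩ := hmem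
  have hptr_pos : 0 < ptr := heq ▸ div_pos hw1 hw2
  have key : ∀ d ∈ Finset.Icc a b,
      -Lu (r d) (Y (u d)) + Real.log ptr ≤
      - Real.log ((f (Y (v d)) (r d) * Pt (v d) (v (d - 1)))
          / (f (Y (u d)) (r d) * Pt (u d) (u (d - 1)))) := by
    intro d _
    have hfu := hf (Y (u d)) (r d)
    have hfv := hf (Y (v d)) (r d)
    have hpu := hu.2 d
    have hpv := hv.2 d
    rw [Real.log_div (by positivity) (by positivity),
      Real.log_mul hfv.ne' hpv.ne', Real.log_mul hfu.ne' hpu.ne']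
    have hL : Real.log (f (Y (v d)) (r d)) - Real.log (f (Y (u d)) (r d))
        ≤ Lu (r d) (Y (u d)) := by
      by_cases h : Y (u d) = Y (v d)
      · rw [show Y (v d) = Y (u d) from h.symm, sub_self]
        obtain ⟨y2, y3, hne⟩ := exists_pair_ne O
        have h1 := hLu (r d) (Y (u d)) y2 y3 hne
        have h2 := hLu (r d) (Y (u d)) y3 y2 hne.symm
        linarith
      · exact hLu _ _ _ _ h
    have hPt' : Real.log ptr ≤
        Real.log (Pt (u d) (u (d - 1))) - Real.log (Pt (v d) (v (d - 1))) := by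
      rw [← Real.log_div hpu.ne' hpv.ne']
      exact Real.log_le_log hptr_pos (hlb ⟨_, _, _, _, hpu, hpv, rfl⟩)
    linarith
  have hsum := Finset.sum_le_sum key
  rw [Finset.sum_add_distrib, Finset.sum_neg_distrib, Finset.sum_const,
    nsmul_eq_mul] at hsum
  have hcard : ((Finset.Icc a b).card : ℝ) = ((b - a + 1 : ℤ) : ℝ) := by
    have hc : (((Finset.Icc a b).card : ℤ)) = b - a + 1 := by
      rw [Int.card_Icc]; omega
    exact_mod_cast congrArg (fun z : ℤ => (z : ℝ)) hc
  rw [hcard] at hsum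
  calc - ∑ d ∈ Finset.Icc a b,
        Real.log ((f (Y (v d)) (r d) * Pt (v d) (v (d - 1)))
          / (f (Y (u d)) (r d) * Pt (u d) (u (d - 1))))
      = ∑ d ∈ Finset.Icc a b,
        - Real.log ((f (Y (v d)) (r d) * Pt (v d) (v (d - 1)))
          / (f (Y (u d)) (r d) * Pt (u d) (u (d - 1)))) := by
        rw [Finset.sum_neg_distrib]
    _ ≥ _ := hsum
end
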